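/- arXiv:2502.06022 — 6 statements merged into one kernel-verified Lean document; each statement's English description precedes it below -/
import Mathlib

section
/- Let X ∈ ℝ^{p×n} (p ≥ 2) be a data matrix, let S = (1/n) X Xᵀ be the sample covariance matrix with eigenvalues ℓ_1 ≥ ℓ_2 ≥ ... ≥ ℓ_p and corresponding orthonormal eigenvectors v_1, ..., v_p, and let 0 < q_1 < q_2 < ... < q_d < p be a signature. Define the eigenflag by S_k* = span(v_1, ..., v_{q_k}) for k = 1, ..., d. Then for every flag S_1 ⊆ S_2 ⊆ ... ⊆ S_d of ℝ^p with dim S_k = q_k, one has ‖X − (1/d) Σ_{k=1}^d Π_{S_k} X‖_F² ≥ ‖X − (1/d) Σ_{k=1}^d Π_{S_k*} X‖_F²; that is, the eigenflag minimizes the flag-tricked PCA criterion over all flags of signature (p, q_{1:d}). -/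
open Matrix Finset

/-- The squared Frobenius norm of a real matrix. -/
noncomputable def frobSq {p n : ℕ} (M : Matrix (Fin p) (Fin n) ℝ) : ℝ :=
  Matrix.trace (Mᵀ * M)

/-- `P k`, for `k = 1, …, d`, are the orthogonal projection matrices onto a flag
`S_1 ⊆ ⋯ ⊆ S_d` of subspaces of `ℝ^p` with `dim S_k = q k`: each `P k` is a symmetric
idempotent of rank `q k`, and nestedness is `P l * P k = P k` for `k ≤ l`. -/
def IsProjFlag (p d : ℕ) (q : ℕ → ℕ) (P : ℕ → Matrix (Fin p) (Fin p) ℝ) : Prop :=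
  (∀ k, 1 ≤ k → k ≤ d → (P k).IsSymm) ∧
  (∀ k, 1 ≤ k → k ≤ d → P k * P k = P k) ∧
  (∀ k, 1 ≤ k → k ≤ d → (P k).rank = q k) ∧
  (∀ k l, 1 ≤ k → k ≤ l → l ≤ d → P l * P k = P k)

/-- Outer product `u_j u_jᵀ` of the `j`-th column of `U`. -/
noncomputable def colOuter {p : ℕ} (U : Matrix (Fin p) (Fin p) ℝ) (j : Fin p) :
    Matrix (Fin p) (Fin p) ℝ :=
  Matrix.vecMulVec (fun i => U i j) (fun i => U i j)

/-- Orthogonal projection matrix onto the span of the first `m` columns of `V`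
(for `V` with orthonormal columns, this is `∑_{j ≤ m} v_j v_jᵀ`). -/
noncomputable def leadProj {p : ℕ} (V : Matrix (Fin p) (Fin p) ℝ) (m : ℕ) :
    Matrix (Fin p) (Fin p) ℝ :=
  ∑ j ∈ Finset.univ.filter (fun j : Fin p => (j : ℕ) < m), colOuter V j


lemma trace_eq_rank_of_symm_idem {p : ℕ} (P : Matrix (Fin p) (Fin p) ℝ)
    (hsymm : P.IsSymm) (hidem : P * P = P) :
    Matrix.trace P = (P.rank : ℝ) := by
  have hherm : P.IsHermitian := by
    rwa [Matrix.IsHermitian, conjTranspose_eq_transpose_of_trivial]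
  set U : Matrix (Fin p) (Fin p) ℝ := (hherm.eigenvectorUnitary : Matrix (Fin p) (Fin p) ℝ) with hUdef
  have hU1 : star U * U = 1 := Unitary.star_mul_self_of_mem hherm.eigenvectorUnitary.2
  have hspec : P = U * Matrix.diagonal hherm.eigenvalues * star U := hherm.spectral_theorem
  set μ := hherm.eigenvalues with hmu
  have key : (U * Matrix.diagonal μ * star U) * (U * Matrix.diagonal μ * star U)
      = U * (Matrix.diagonal μ * Matrix.diagonal μ) * star U := by
    simp only [Matrix.mul_assoc]
    rw [← Matrix.mul_assoc (star U) U (Matrix.diagonal μ * star U), hU1, Matrix.one_mul]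
  have hDD : Matrix.diagonal μ * Matrix.diagonal μ = Matrix.diagonal μ := by
    have h2 : U * (Matrix.diagonal μ * Matrix.diagonal μ) * star U
        = U * Matrix.diagonal μ * star U := by rw [← key, ← hspec, hidem, hspec]
    have h3 := congrArg (fun M => star U * M * U) h2
    simpa only [Matrix.mul_assoc, ← Matrix.mul_assoc (star U) U, hU1, Matrix.one_mul,
      mul_eq_one_comm.mp hU1, Matrix.mul_one] using h3
  have hmu01 : ∀ i, μ i = 0 ∨ μ i = 1 := by
    intro i
    have h4 := congrFun (congrFun hDD i) i
    simp only [Matrix.diagonal_mul_diagonal, Matrix.diagonal_apply_eq, Pi.mul_apply] at h4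
    have : μ i * (μ i - 1) = 0 := by ring_nf; linarith [h4]
    rcases mul_eq_zero.mp this with h | h
    · exact Or.inl h
    · exact Or.inr (by linarith)
  have htr : Matrix.trace P = ∑ i, μ i := by
    rw [hspec, Matrix.trace_mul_comm, ← Matrix.mul_assoc, hU1, Matrix.one_mul,
      Matrix.trace_diagonal]
  have hrank : P.rank = Fintype.card {i // μ i ≠ 0} := hherm.rank_eq_card_non_zero_eigs
  rw [htr, hrank, Fintype.card_subtype]
  rw [← Finset.sum_filter_ne_zero Finset.univ]
  have hone : ∀ i ∈ Finset.univ.filter (fun i => μ i ≠ 0), μ i = 1 := by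
    intro i hi
    rcases hmu01 i with h | h
    · exact absurd h (by simpa using hi)
    · exact h
  rw [Finset.sum_congr rfl hone]
  simp


lemma card_filter_fin_lt {p q : ℕ} (hqp : q ≤ p) :
    (Finset.univ.filter (fun j : Fin p => (j : ℕ) < q)).card = q := by
  have : Finset.univ.filter (fun j : Fin p => (j : ℕ) < q)
      = Finset.map (Fin.castLEEmb hqp) Finset.univ := by
    ext j
    simp only [Finset.mem_filter, Finset.mem_univ, true_and, Finset.mem_map, Fin.castLEEmb]
    constructor
    · intro hj; exact ⟨⟨(j : ℕ), hj⟩, by simp [Fin.castLE, Fin.ext_iff]⟩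
    · rintro ⟨i, rfl⟩; simpa using i.2
  rw [this, Finset.card_map, Finset.card_univ, Fintype.card_fin]

lemma sum_weights_le {p q : ℕ} (hq1 : 1 ≤ q) (hqp : q ≤ p) (ℓ : Fin p → ℝ)
    (hsort : ∀ i j : Fin p, i ≤ j → ℓ j ≤ ℓ i) (w : Fin p → ℝ)
    (hw0 : ∀ j, 0 ≤ w j) (hw1 : ∀ j, w j ≤ 1) (hsum : ∑ j, w j = (q : ℝ)) :
    ∑ j, w j * ℓ j ≤ ∑ j ∈ Finset.univ.filter (fun j : Fin p => (j : ℕ) < q), ℓ j := by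
  set t : ℝ := ℓ ⟨q - 1, by omega⟩ with ht
  have hcard : (Finset.univ.filter (fun j : Fin p => (j : ℕ) < q)).card = q :=
    card_filter_fin_lt hqp
  have key : ∀ j : Fin p, 0 ≤ ((if (j : ℕ) < q then (1:ℝ) else 0) - w j) * (ℓ j - t) := by
    intro j
    by_cases hj : (j : ℕ) < q
    · have h1 : t ≤ ℓ j := hsort j ⟨q - 1, by omega⟩ (by simp [Fin.le_def]; omega)
      simp only [hj, if_pos]
      exact mul_nonneg (by linarith [hw1 j]) (by linarith)
    · have h1 : ℓ j ≤ t := hsort ⟨q - 1, by omega⟩ j (by simp [Fin.le_def]; omega)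
      simp only [hj, if_neg, not_false_iff]
      have := hw0 j
      nlinarith
  have hsum2 : 0 ≤ ∑ j : Fin p, ((if (j : ℕ) < q then (1:ℝ) else 0) - w j) * (ℓ j - t) :=
    Finset.sum_nonneg (fun j _ => key j)
  have hind : ∑ j : Fin p, (if (j : ℕ) < q then (1:ℝ) else 0) = (q : ℝ) := by
    rw [Finset.sum_boole]
    simp [hcard]
  have hindl : ∑ j : Fin p, (if (j : ℕ) < q then (1:ℝ) else 0) * ℓ j
      = ∑ j ∈ Finset.univ.filter (fun j : Fin p => (j : ℕ) < q), ℓ j := by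
    rw [Finset.sum_filter]
    exact Finset.sum_congr rfl (fun j _ => by by_cases h : (j:ℕ) < q <;> simp [h])
  have expand : ∑ j : Fin p, ((if (j : ℕ) < q then (1:ℝ) else 0) - w j) * (ℓ j - t)
      = (∑ j : Fin p, (if (j : ℕ) < q then (1:ℝ) else 0) * ℓ j) - (∑ j : Fin p, w j * ℓ j)
        - t * ((∑ j : Fin p, (if (j : ℕ) < q then (1:ℝ) else 0)) - ∑ j : Fin p, w j) := by
    simp only [sub_mul, mul_sub, Finset.sum_sub_distrib, Finset.mul_sum]
    simp only [mul_comm t _]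
  rw [expand, hind, hsum] at hsum2
  rw [← hindl]
  linarith


lemma trace_mul_VDVt {p : ℕ} (C V : Matrix (Fin p) (Fin p) ℝ) (ℓ : Fin p → ℝ) :
    Matrix.trace (C * (V * Matrix.diagonal ℓ * Vᵀ))
      = ∑ j, (Vᵀ * C * V) j j * ℓ j := by
  have h1 : C * (V * Matrix.diagonal ℓ * Vᵀ) = (C * V) * Matrix.diagonal ℓ * Vᵀ := by
    noncomm_ring
  rw [h1, Matrix.trace_mul_comm (C * V * Matrix.diagonal ℓ) Vᵀ, ← Matrix.mul_assoc,
    ← Matrix.mul_assoc]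
  simp only [Matrix.trace, Matrix.diag, Matrix.mul_apply, Matrix.diagonal_apply]
  simp

lemma diag_conj_nonneg {p : ℕ} (B : Matrix (Fin p) (Fin p) ℝ) (j : Fin p) :
    0 ≤ (Bᵀ * B) j j := by
  rw [Matrix.mul_apply]
  exact Finset.sum_nonneg fun i _ => by simp [Matrix.transpose_apply]; exact mul_self_nonneg _

lemma kyfan {p q : ℕ} (hq1 : 1 ≤ q) (hqp : q ≤ p)
    (V : Matrix (Fin p) (Fin p) ℝ) (hV : Vᵀ * V = 1) (ℓ : Fin p → ℝ)
    (hsort : ∀ i j : Fin p, i ≤ j → ℓ j ≤ ℓ i)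
    (P : Matrix (Fin p) (Fin p) ℝ) (hsymm : P.IsSymm) (hidem : P * P = P)
    (hrank : P.rank = q) :
    Matrix.trace (P * (V * Matrix.diagonal ℓ * Vᵀ))
      ≤ ∑ j ∈ Finset.univ.filter (fun j : Fin p => (j : ℕ) < q), ℓ j := by
  rw [trace_mul_VDVt]
  set w : Fin p → ℝ := fun j => (Vᵀ * P * V) j j with hw
  have hPt : Pᵀ = P := hsymm
  apply sum_weights_le hq1 hqp ℓ hsort w
  · intro j
    have : Vᵀ * P * V = (P * V)ᵀ * (P * V) := by
      rw [Matrix.transpose_mul, hPt]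
      conv_lhs => rw [← hidem]
      noncomm_ring
    rw [hw]; simp only []
    rw [this]; exact diag_conj_nonneg _ j
  · intro j
    have hQ : ((1 - P) * V)ᵀ * ((1 - P) * V) = Vᵀ * (1 - P) * V := by
      rw [Matrix.transpose_mul, Matrix.transpose_sub, Matrix.transpose_one, hPt]
      have : (1 - P) * ((1 - P) * V) = (1 - P) * V := by
        rw [← Matrix.mul_assoc]
        congr 1
        simp only [Matrix.sub_mul, Matrix.mul_sub, Matrix.one_mul, Matrix.mul_one, hidem]
        abel
      simp only [Matrix.mul_assoc]
      rw [this]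
    have h0 : 0 ≤ (Vᵀ * (1 - P) * V) j j := by
      rw [← hQ]; exact diag_conj_nonneg _ j
    have hsplit : Vᵀ * (1 - P) * V = 1 - Vᵀ * P * V := by
      rw [Matrix.mul_sub, Matrix.mul_one, Matrix.sub_mul, hV]
    rw [hsplit] at h0
    have : (1 - Vᵀ * P * V) j j = 1 - w j := by
      simp [Matrix.sub_apply, Matrix.one_apply, hw]
    linarith [this ▸ h0]
  · have hVVt : V * Vᵀ = 1 := by
      rw [← Matrix.transpose_transpose V] ; exact mul_eq_one_comm.mp (by simpa using hV)
    have : ∑ j, w j = Matrix.trace (Vᵀ * P * V) := by simp [Matrix.trace, Matrix.diag, hw]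
    rw [this, Matrix.trace_mul_comm, ← Matrix.mul_assoc, hVVt, Matrix.one_mul,
      trace_eq_rank_of_symm_idem P hsymm hidem, hrank]

lemma colOuter_mul {p : ℕ} {V : Matrix (Fin p) (Fin p) ℝ} (hV : Vᵀ * V = 1) (i j : Fin p) :
    colOuter V i * colOuter V j = if i = j then colOuter V i else 0 := by
  have hdot : ∑ k, V k i * V k j = if i = j then (1:ℝ) else 0 := by
    have := congrFun (congrFun hV i) j
    simpa [Matrix.mul_apply, Matrix.one_apply, Matrix.transpose_apply] using this
  ext a b
  simp only [colOuter, Matrix.mul_apply, Matrix.vecMulVec_apply]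
  by_cases h : i = j
  · subst h
    simp only [if_pos rfl]
    have h1 : ∑ k, V k i * V k i = 1 := by simpa using hdot
    calc ∑ k, V a i * V k i * (V k i * V b i) = (∑ k, V k i * V k i) * (V a i * V b i) := by
          rw [Finset.sum_mul]; exact Finset.sum_congr rfl fun k _ => by ring
      _ = V a i * V b i := by rw [h1, one_mul]
  · simp only [if_neg h, Matrix.zero_apply]
    calc ∑ k, V a i * V k i * (V k j * V b j) = (∑ k, V k i * V k j) * (V a i * V b j) := by
          rw [Finset.sum_mul]; exact Finset.sum_congr rfl fun k _ => by ring
      _ = 0 := by rw [hdot]; simp [h]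

lemma leadProj_isSymm {p : ℕ} (V : Matrix (Fin p) (Fin p) ℝ) (m : ℕ) :
    (leadProj V m).IsSymm := by
  unfold Matrix.IsSymm leadProj
  rw [Matrix.transpose_sum]
  exact Finset.sum_congr rfl fun j _ => by
    ext a b; simp [colOuter, Matrix.vecMulVec_apply, Matrix.transpose_apply, mul_comm]

lemma leadProj_mul {p : ℕ} {V : Matrix (Fin p) (Fin p) ℝ} (hV : Vᵀ * V = 1) (m₁ m₂ : ℕ) :
    leadProj V m₁ * leadProj V m₂ = leadProj V (min m₁ m₂) := by
  unfold leadProj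
  rw [Finset.sum_mul_sum]
  have : ∀ i ∈ Finset.univ.filter (fun j : Fin p => (j : ℕ) < m₁),
      ∑ j ∈ Finset.univ.filter (fun j : Fin p => (j : ℕ) < m₂), colOuter V i * colOuter V j
      = if (i : ℕ) < m₂ then colOuter V i else 0 := by
    intro i _
    rw [Finset.sum_congr rfl (fun j _ => colOuter_mul hV i j), Finset.sum_ite_eq
      (Finset.univ.filter (fun j : Fin p => (j : ℕ) < m₂)) i (fun _ => colOuter V i)]
    simp
  rw [Finset.sum_congr rfl this, Finset.sum_filter, Finset.sum_filter]
  refine Finset.sum_congr rfl fun j _ => ?_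
  by_cases h1 : (j:ℕ) < m₁ <;> by_cases h2 : (j:ℕ) < m₂ <;>
    simp [h1, h2, lt_min_iff]

lemma conj_colOuter {p : ℕ} {V : Matrix (Fin p) (Fin p) ℝ} (hV : Vᵀ * V = 1) (i a b : Fin p) :
    (Vᵀ * colOuter V i * V) a b
      = (if a = i then (1:ℝ) else 0) * (if i = b then (1:ℝ) else 0) := by
  have key : (Vᵀ * colOuter V i * V) a b = (Vᵀ * V) a i * (Vᵀ * V) i b := by
    simp only [Matrix.mul_apply, colOuter, Matrix.vecMulVec_apply, Matrix.transpose_apply]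
    calc ∑ y, (∑ x, V x a * (V x i * V y i)) * V y b
        = ∑ y, (∑ x, V x a * V x i) * (V y i * V y b) := by
          refine Finset.sum_congr rfl fun y _ => ?_
          rw [Finset.sum_mul, Finset.sum_mul]
          exact Finset.sum_congr rfl fun x _ => by ring
      _ = (∑ x, V x a * V x i) * ∑ y, V y i * V y b := by
          rw [Finset.mul_sum]
  rw [key, hV]
  simp [Matrix.one_apply]

lemma trace_leadProj {p : ℕ} {V : Matrix (Fin p) (Fin p) ℝ} (hV : Vᵀ * V = 1)
    (ℓ : Fin p → ℝ) (m : ℕ) :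
    Matrix.trace (leadProj V m * (V * Matrix.diagonal ℓ * Vᵀ))
      = ∑ j ∈ Finset.univ.filter (fun j : Fin p => (j : ℕ) < m), ℓ j := by
  have hdiag : ∀ j : Fin p, (Vᵀ * leadProj V m * V) j j
      = if (j : ℕ) < m then (1:ℝ) else 0 := by
    intro j
    have hexp : Vᵀ * leadProj V m * V
        = ∑ i ∈ Finset.univ.filter (fun i : Fin p => (i : ℕ) < m), Vᵀ * colOuter V i * V := by
      unfold leadProj
      rw [Finset.mul_sum, Finset.sum_mul]
    rw [hexp, Matrix.sum_apply]
    rw [Finset.sum_congr rfl (fun i _ => conj_colOuter hV i j j)]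
    have hsimp : ∀ i ∈ Finset.univ.filter (fun i : Fin p => (i : ℕ) < m),
        (if j = i then (1:ℝ) else 0) * (if i = j then (1:ℝ) else 0)
          = if i = j then (1:ℝ) else 0 := fun i _ => by
      by_cases h : i = j <;> simp [h, eq_comm]
    rw [Finset.sum_congr rfl hsimp, Finset.sum_ite_eq'
      (Finset.univ.filter (fun i : Fin p => (i : ℕ) < m)) j (fun _ => (1:ℝ))]
    simp
  rw [trace_mul_VDVt]
  have : ∀ j : Fin p, (Vᵀ * leadProj V m * V) j j * ℓ j
      = if (j : ℕ) < m then ℓ j else 0 := fun j => by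
    rw [hdiag j]; by_cases h : (j:ℕ) < m <;> simp [h]
  rw [Finset.sum_congr rfl (fun j _ => this j), ← Finset.sum_filter]

lemma trace_conjXX {p n : ℕ} (X : Matrix (Fin p) (Fin n) ℝ) (C : Matrix (Fin p) (Fin p) ℝ) :
    Matrix.trace ((C * X)ᵀ * (C * X)) = Matrix.trace (Cᵀ * (C * (X * Xᵀ))) := by
  rw [Matrix.transpose_mul, Matrix.mul_assoc, Matrix.trace_mul_comm Xᵀ]
  simp only [Matrix.mul_assoc]

lemma crit_formula {p n d : ℕ} (hd : 1 ≤ d) (X : Matrix (Fin p) (Fin n) ℝ)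
    (P : ℕ → Matrix (Fin p) (Fin p) ℝ)
    (hsymm : ∀ k, 1 ≤ k → k ≤ d → (P k).IsSymm)
    (hnest : ∀ k l, 1 ≤ k → k ≤ l → l ≤ d → P l * P k = P k) :
    frobSq (X - ((1 : ℝ) / d) • ∑ k ∈ Finset.Icc 1 d, P k * X)
      = Matrix.trace (X * Xᵀ) - ((1:ℝ)/d)^2 *
          ∑ k ∈ Finset.Icc 1 d, ∑ l ∈ Finset.Icc 1 d,
            Matrix.trace (P (max k l) * (X * Xᵀ)) := by
  set c : ℝ := (1:ℝ)/d with hcdef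
  set B : Matrix (Fin p) (Fin p) ℝ := ∑ k ∈ Finset.Icc 1 d, P k with hB
  set M : Matrix (Fin p) (Fin p) ℝ := X * Xᵀ with hM
  have hd0 : (d:ℝ) ≠ 0 := Nat.cast_ne_zero.mpr (by omega)
  have hc : c * d = 1 := by rw [hcdef]; field_simp
  -- rewrite the argument
  have h0 : X - c • ∑ k ∈ Finset.Icc 1 d, P k * X = (1 - c • B) * X := by
    rw [hB, Matrix.sub_mul, Matrix.one_mul, Matrix.smul_mul, Matrix.sum_mul]
  rw [h0]
  -- transpose symmetry
  have hBsymm : Bᵀ = B := by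
    rw [hB, Matrix.transpose_sum]
    exact Finset.sum_congr rfl fun k hk => by
      have := hsymm k (Finset.mem_Icc.mp hk).1 (Finset.mem_Icc.mp hk).2
      exact this
  have hCt : (1 - c • B)ᵀ = 1 - c • B := by
    rw [Matrix.transpose_sub, Matrix.transpose_one, Matrix.transpose_smul, hBsymm]
  rw [frobSq, trace_conjXX, hCt]
  -- expand
  have hexp : Matrix.trace ((1 - c • B) * ((1 - c • B) * M))
      = Matrix.trace M - 2 * c * Matrix.trace (B * M)
        + c^2 * Matrix.trace (B * (B * M)) := by
    simp only [Matrix.sub_mul, Matrix.one_mul, Matrix.mul_sub, Matrix.smul_mul,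
      Matrix.mul_smul, Matrix.trace_sub, Matrix.trace_smul, smul_eq_mul]
    ring
  rw [hexp]
  -- sums
  have hBM : Matrix.trace (B * M) = ∑ k ∈ Finset.Icc 1 d, Matrix.trace (P k * M) := by
    rw [hB, Matrix.sum_mul, Matrix.trace_sum]
  have hBBM : Matrix.trace (B * (B * M))
      = ∑ k ∈ Finset.Icc 1 d, ∑ l ∈ Finset.Icc 1 d, Matrix.trace (P k * (P l * M)) := by
    rw [hB, Matrix.sum_mul, Matrix.trace_sum]
    refine Finset.sum_congr rfl fun k _ => ?_
    rw [Matrix.sum_mul, Matrix.mul_sum, Matrix.trace_sum]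
  -- per-pair identity
  have hmul : ∀ k l, 1 ≤ k → k ≤ d → 1 ≤ l → l ≤ d → P k * P l = P (min k l) := by
    intro k l hk1 hkd hl1 hld
    rcases le_total k l with h | h
    · have h1 : P l * P k = P k := hnest k l hk1 h hld
      rw [min_eq_left h]
      calc P k * P l = ((P l)ᵀ * (P k)ᵀ)ᵀ := by
            rw [← Matrix.transpose_mul, Matrix.transpose_transpose]
        _ = (P l * P k)ᵀ := by rw [hsymm l hl1 hld, hsymm k hk1 hkd]
        _ = (P k)ᵀ := by rw [h1]
        _ = P k := hsymm k hk1 hkd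
    · rw [min_eq_right h]
      exact hnest l k hl1 h hkd
  have pair : ∀ k ∈ Finset.Icc 1 d, ∀ l ∈ Finset.Icc 1 d,
      Matrix.trace (P k * (P l * M)) = Matrix.trace (P k * M) + Matrix.trace (P l * M)
        - Matrix.trace (P (max k l) * M) := by
    intro k hk l hl
    obtain ⟨hk1, hkd⟩ := Finset.mem_Icc.mp hk
    obtain ⟨hl1, hld⟩ := Finset.mem_Icc.mp hl
    have : Matrix.trace (P k * (P l * M)) = Matrix.trace (P (min k l) * M) := by
      rw [← Matrix.mul_assoc, hmul k l hk1 hkd hl1 hld]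
    rw [this]
    rcases le_total k l with h | h
    · rw [min_eq_left h, max_eq_right h]; ring
    · rw [min_eq_right h, max_eq_left h]; ring
  have hBBM2 : Matrix.trace (B * (B * M))
      = 2 * d * (∑ k ∈ Finset.Icc 1 d, Matrix.trace (P k * M))
        - ∑ k ∈ Finset.Icc 1 d, ∑ l ∈ Finset.Icc 1 d, Matrix.trace (P (max k l) * M) := by
    rw [hBBM]
    rw [Finset.sum_congr rfl fun k hk => Finset.sum_congr rfl fun l hl => pair k hk l hl]
    have h1 : ∀ k ∈ Finset.Icc 1 d, ∑ l ∈ Finset.Icc 1 d,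
        (Matrix.trace (P k * M) + Matrix.trace (P l * M) - Matrix.trace (P (max k l) * M))
        = (d:ℝ) * Matrix.trace (P k * M) + (∑ l ∈ Finset.Icc 1 d, Matrix.trace (P l * M))
          - ∑ l ∈ Finset.Icc 1 d, Matrix.trace (P (max k l) * M) := by
      intro k _
      rw [Finset.sum_sub_distrib, Finset.sum_add_distrib, Finset.sum_const, Nat.card_Icc]
      simp only [nsmul_eq_mul, Nat.add_sub_cancel]
    rw [Finset.sum_congr rfl h1, Finset.sum_sub_distrib, Finset.sum_add_distrib,
      ← Finset.mul_sum, Finset.sum_const, Nat.card_Icc, nsmul_eq_mul,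
      Nat.add_sub_cancel]
    ring
  rw [hBM, hBBM2]
  set T := ∑ k ∈ Finset.Icc 1 d, Matrix.trace (P k * M)
  set S := ∑ k ∈ Finset.Icc 1 d, ∑ l ∈ Finset.Icc 1 d, Matrix.trace (P (max k l) * M)
  linear_combination (2 * c * T) * hc

/-- Nested PCA with flags, Theorem 3.1: the eigenflag of the sample
covariance matrix `S = (1/n) X Xᵀ` minimizes the flag-tricked PCA criterion
`‖X − (1/d) ∑ₖ Π_{S_k} X‖_F²` over all flags of signature `(p, q_{1:d})`. -/
theorem flag_trick_pca_eigenflag_minimizes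
    {p n d : ℕ} (hp : 2 ≤ p) (hn : 1 ≤ n) (hd : 1 ≤ d)
    (q : ℕ → ℕ) (hq1 : 0 < q 1)
    (hmono : ∀ k, 1 ≤ k → k < d → q k < q (k + 1)) (hqd : q d < p)
    (X : Matrix (Fin p) (Fin n) ℝ)
    (ℓ : Fin p → ℝ) (V : Matrix (Fin p) (Fin p) ℝ)
    (hV : Vᵀ * V = 1)
    (hsort : ∀ i j : Fin p, i ≤ j → ℓ j ≤ ℓ i)
    (hS : ((1 : ℝ) / n) • (X * Xᵀ) = V * Matrix.diagonal ℓ * Vᵀ)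
    (P : ℕ → Matrix (Fin p) (Fin p) ℝ)
    (hP : IsProjFlag p d q P) :
    frobSq (X - ((1 : ℝ) / d) • ∑ k ∈ Finset.Icc 1 d, P k * X) ≥
      frobSq (X - ((1 : ℝ) / d) • ∑ k ∈ Finset.Icc 1 d, leadProj V (q k) * X) := by
  obtain ⟨hPsymm, hPidem, hPrank, hPnest⟩ := hP
  have qmono : ∀ k l, 1 ≤ k → k ≤ l → l ≤ d → q k ≤ q l := by
    intro k l hk1 hkl hld
    induction l with
    | zero => omega
    | succ m ih =>
      rcases Nat.lt_or_ge k (m+1) with h | h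
      · have hkm : k ≤ m := by omega
        have := ih hkm (by omega)
        have h2 : q m < q (m+1) := hmono m (by omega) (by omega)
        omega
      · have : k = m + 1 := by omega
        subst this; exact le_rfl
  have hq_ge : ∀ k, 1 ≤ k → k ≤ d → 1 ≤ q k :=
    fun k h1 h2 => le_trans hq1 (qmono 1 k le_rfl h1 h2)
  have hq_le : ∀ k, 1 ≤ k → k ≤ d → q k ≤ p :=
    fun k h1 h2 => le_of_lt (lt_of_le_of_lt (qmono k d h1 h2 le_rfl) hqd)
  have hs_symm : ∀ k, 1 ≤ k → k ≤ d → (leadProj V (q k)).IsSymm :=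
    fun k _ _ => leadProj_isSymm V (q k)
  have hs_nest : ∀ k l, 1 ≤ k → k ≤ l → l ≤ d →
      leadProj V (q l) * leadProj V (q k) = leadProj V (q k) := by
    intro k l hk1 hkl hld
    rw [leadProj_mul hV, min_eq_right (qmono k l hk1 hkl hld)]
  rw [crit_formula hd X P hPsymm hPnest,
    crit_formula hd X (fun k => leadProj V (q k)) hs_symm hs_nest]
  have hn0 : (n:ℝ) ≠ 0 := Nat.cast_ne_zero.mpr (by omega)
  have hXX : X * Xᵀ = (n:ℝ) • (V * Matrix.diagonal ℓ * Vᵀ) := by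
    rw [← hS, smul_smul]
    rw [show (n:ℝ) * ((1:ℝ)/n) = 1 by field_simp, one_smul]
  have key : ∀ m, 1 ≤ m → m ≤ d →
      Matrix.trace (P m * (X * Xᵀ)) ≤ Matrix.trace (leadProj V (q m) * (X * Xᵀ)) := by
    intro m h1 h2
    rw [hXX, Matrix.mul_smul, Matrix.trace_smul, Matrix.mul_smul, Matrix.trace_smul]
    have h3 := kyfan (hq_ge m h1 h2) (hq_le m h1 h2) V hV ℓ hsort (P m)
      (hPsymm m h1 h2) (hPidem m h1 h2) (hPrank m h1 h2)
    rw [trace_leadProj hV ℓ (q m)] at *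
    simp only [smul_eq_mul]
    exact mul_le_mul_of_nonneg_left h3 (Nat.cast_nonneg n)
  have hsum : ∑ k ∈ Finset.Icc 1 d, ∑ l ∈ Finset.Icc 1 d,
        Matrix.trace (P (max k l) * (X * Xᵀ))
      ≤ ∑ k ∈ Finset.Icc 1 d, ∑ l ∈ Finset.Icc 1 d,
        Matrix.trace (leadProj V (q (max k l)) * (X * Xᵀ)) := by
    refine Finset.sum_le_sum fun k hk => Finset.sum_le_sum fun l hl => ?_
    obtain ⟨hk1, hkd⟩ := Finset.mem_Icc.mp hk
    obtain ⟨hl1, hld⟩ := Finset.mem_Icc.mp hl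
    exact key (max k l) (le_max_of_le_left hk1) (max_le hkd hld)
  have hc2 : (0:ℝ) ≤ ((1:ℝ)/d)^2 := sq_nonneg _
  have := mul_le_mul_of_nonneg_left hsum hc2
  linarith
end

section
/- Let X ∈ ℝ^{p×n} (p ≥ 2), let S = (1/n) X Xᵀ have eigenvalues ℓ_1 ≥ ... ≥ ℓ_p with orthonormal eigenvectors v_1, ..., v_p, let 0 < q_1 < ... < q_d < p be a signature, and let α_1, ..., α_d > 0 be positive weights with Σ_{k=1}^d α_k = 1. Define S_k* = span(v_1, ..., v_{q_k}). Then for every flag S_1 ⊆ ... ⊆ S_d of ℝ^p with dim S_k = q_k, one has ‖X − Σ_{k=1}^d α_k Π_{S_k} X‖_F² ≥ ‖X − Σ_{k=1}^d α_k Π_{S_k*} X‖_F²; that is, the eigenflag minimizes the weighted flag-tricked PCA criterion for any positive convex weights. -/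
open Matrix Finset

/- ### Auxiliary lemmas -/

lemma ftpca_trace_idem_rank {p : ℕ} (P : Matrix (Fin p) (Fin p) ℝ) (h : P * P = P) :
    Matrix.trace P = (P.rank : ℝ) := by
  set f := P.mulVecLin with hfdef
  have hf : f ∘ₗ f = f := by rw [hfdef, ← Matrix.mulVecLin_mul, h]
  obtain ⟨W, hW⟩ := (LinearMap.isProj_iff_isIdempotentElem f).mpr hf
  have hrange : W = LinearMap.range f := by
    apply le_antisymm
    · intro x hx
      exact ⟨x, hW.map_id x hx⟩
    · rintro x ⟨y, rfl⟩
      exact hW.map_mem y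
  have htr : LinearMap.trace ℝ (Fin p → ℝ) f = (Module.finrank ℝ W : ℝ) := hW.trace
  have h2 : LinearMap.trace ℝ (Fin p → ℝ) f = Matrix.trace P := by
    rw [LinearMap.trace_eq_matrix_trace ℝ (Pi.basisFun ℝ (Fin p)) f,
      LinearMap.toMatrix_eq_toMatrix', hfdef, ← Matrix.toLin'_apply', LinearMap.toMatrix'_toLin']
  rw [← h2, htr, hrange]
  rfl

lemma ftpca_ind_sum {p m : ℕ} (hm : m ≤ p) :
    ∑ j : Fin p, (if (j : ℕ) < m then (1:ℝ) else 0) = m := by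
  rw [Fin.sum_univ_eq_sum_range (fun j => if j < m then (1:ℝ) else 0) p]
  have : ∀ j, (if j < m then (1:ℝ) else 0) = if j ∈ Finset.range m then (1:ℝ) else 0 := by
    intro j; simp [Finset.mem_range]
  simp_rw [this]
  rw [Finset.sum_ite_mem, Finset.inter_eq_right.mpr (Finset.range_subset_range.mpr hm)]
  simp

lemma ftpca_kyfan_scalar {p m : ℕ} (hm : m < p) (ℓ c : Fin p → ℝ)
    (hsort : ∀ i j : Fin p, i ≤ j → ℓ j ≤ ℓ i)
    (hc0 : ∀ j, 0 ≤ c j) (hc1 : ∀ j, c j ≤ 1)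
    (hcs : ∑ j, c j = m) :
    ∑ j, ℓ j * c j ≤ ∑ j : Fin p, (if (j : ℕ) < m then ℓ j else 0) := by
  set M : Fin p := ⟨m, hm⟩ with hM
  have key : ∀ j : Fin p, ℓ j * c j - (if (j:ℕ) < m then ℓ j else 0)
      ≤ ℓ M * (c j - (if (j:ℕ) < m then (1:ℝ) else 0)) := by
    intro j
    by_cases hj : (j : ℕ) < m
    · simp only [if_pos hj]
      have h1 : ℓ M ≤ ℓ j := hsort j M (by simp [Fin.le_def, hM]; omega)
      nlinarith [hc1 j, hc0 j]
    · simp only [if_neg hj]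
      have h1 : ℓ j ≤ ℓ M := hsort M j (by simp [Fin.le_def, hM]; omega)
      nlinarith [hc0 j]
  have hsum := Finset.sum_le_sum (fun j (_ : j ∈ Finset.univ) => key j)
  rw [Finset.sum_sub_distrib] at hsum
  have h2 : ∑ j : Fin p, ℓ M * (c j - (if (j:ℕ) < m then (1:ℝ) else 0)) = 0 := by
    rw [← Finset.mul_sum, Finset.sum_sub_distrib, hcs, ftpca_ind_sum (le_of_lt hm)]
    ring
  linarith

noncomputable def indDiag (p m : ℕ) : Matrix (Fin p) (Fin p) ℝ :=
  Matrix.diagonal (fun j : Fin p => if (j : ℕ) < m then 1 else 0)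

lemma ftpca_leadProj_eq {p : ℕ} (V : Matrix (Fin p) (Fin p) ℝ) (m : ℕ) :
    leadProj V m = V * indDiag p m * Vᵀ := by
  ext i i'
  rw [leadProj, Matrix.sum_apply, Finset.sum_filter, Matrix.mul_apply]
  refine Finset.sum_congr rfl fun j _ => ?_
  rw [indDiag, Matrix.mul_diagonal]
  simp only [colOuter, Matrix.vecMulVec_apply, Matrix.transpose_apply]
  split_ifs <;> ring

lemma ftpca_indDiag_mul (p a b : ℕ) : indDiag p a * indDiag p b = indDiag p (min a b) := by
  rw [indDiag, indDiag, indDiag, Matrix.diagonal_mul_diagonal]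
  ext i j
  by_cases hij : i = j
  · subst hij
    simp only [Matrix.diagonal_apply_eq, lt_min_iff]
    split_ifs <;> simp_all
  · simp [Matrix.diagonal_apply_ne _ hij]

lemma ftpca_trace_mul_diag {p : ℕ} (M : Matrix (Fin p) (Fin p) ℝ) (d : Fin p → ℝ) :
    Matrix.trace (M * Matrix.diagonal d) = ∑ j, M j j * d j := by
  rw [Matrix.trace]
  refine Finset.sum_congr rfl fun j _ => ?_
  rw [Matrix.diag_apply, Matrix.mul_diagonal]

lemma ftpca_expand {p n d : ℕ} (X : Matrix (Fin p) (Fin n) ℝ) (α : ℕ → ℝ)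
    (Q : ℕ → Matrix (Fin p) (Fin p) ℝ)
    (hsym : ∀ k ∈ Finset.Icc 1 d, (Q k)ᵀ = Q k) :
    frobSq (X - ∑ k ∈ Finset.Icc 1 d, α k • (Q k * X)) =
      Matrix.trace (X * Xᵀ) - 2 * ∑ k ∈ Finset.Icc 1 d, α k * Matrix.trace (Q k * (X * Xᵀ))
      + ∑ k ∈ Finset.Icc 1 d, ∑ l ∈ Finset.Icc 1 d,
          α k * α l * Matrix.trace (Q k * Q l * (X * Xᵀ)) := by
  set K := Finset.Icc 1 d
  set M : Matrix (Fin p) (Fin p) ℝ := ∑ k ∈ K, α k • Q k with hM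
  have hMX : ∑ k ∈ K, α k • (Q k * X) = M * X := by
    rw [hM, Matrix.sum_mul]
    exact Finset.sum_congr rfl fun k _ => (Matrix.smul_mul _ _ _).symm
  have hMT : Mᵀ = M := by
    rw [hM, Matrix.transpose_sum]
    exact Finset.sum_congr rfl fun k hk => by rw [Matrix.transpose_smul, hsym k hk]
  rw [hMX, frobSq]
  have h1 : (X - M * X)ᵀ * (X - M * X)
      = Xᵀ * X - Xᵀ * (M * X) - Xᵀ * (M * X) + Xᵀ * (M * (M * X)) := by
    rw [Matrix.transpose_sub, Matrix.transpose_mul, hMT, Matrix.sub_mul, Matrix.mul_sub,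
      Matrix.mul_sub]
    simp only [Matrix.mul_assoc]
    abel
  rw [h1, Matrix.trace_add, Matrix.trace_sub, Matrix.trace_sub]
  have htX : Matrix.trace (Xᵀ * X) = Matrix.trace (X * Xᵀ) := Matrix.trace_mul_comm _ _
  have htM : Matrix.trace (Xᵀ * (M * X)) = ∑ k ∈ K, α k * Matrix.trace (Q k * (X * Xᵀ)) := by
    rw [Matrix.trace_mul_comm, Matrix.mul_assoc, hM, Matrix.sum_mul, Matrix.trace_sum]
    refine Finset.sum_congr rfl fun k _ => ?_
    rw [Matrix.smul_mul, Matrix.trace_smul, smul_eq_mul]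
  have htMM : Matrix.trace (Xᵀ * (M * (M * X)))
      = ∑ k ∈ K, ∑ l ∈ K, α k * α l * Matrix.trace (Q k * Q l * (X * Xᵀ)) := by
    rw [Matrix.trace_mul_comm]
    have h2 : M * (M * X) * Xᵀ = M * M * (X * Xᵀ) := by
      simp only [Matrix.mul_assoc]
    rw [h2, hM, Finset.sum_mul_sum]
    rw [Matrix.sum_mul, Matrix.trace_sum]
    refine Finset.sum_congr rfl fun k _ => ?_
    rw [Matrix.sum_mul, Matrix.trace_sum]
    refine Finset.sum_congr rfl fun l _ => ?_
    simp only [Matrix.smul_mul, Matrix.mul_smul, Matrix.trace_smul, smul_eq_mul, smul_smul]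
    ring
  rw [htX, htM, htMM]
  ring

lemma ftpca_q_mono (d : ℕ) (q : ℕ → ℕ)
    (hmono : ∀ k, 1 ≤ k → k < d → q k < q (k + 1)) :
    ∀ k l, 1 ≤ k → k ≤ l → l ≤ d → q k ≤ q l := by
  intro k l hk
  induction l with
  | zero => intro h1 _; omega
  | succ l ih =>
    intro hkl hld
    rcases Nat.eq_or_lt_of_le hkl with h | h
    · rw [h]
    · have h1 : q k ≤ q l := ih (by omega) (by omega)
      have h2 : q l < q (l + 1) := hmono l (by omega) (by omega)
      omega

lemma ftpca_diag_conj_nonneg {p : ℕ} (V R : Matrix (Fin p) (Fin p) ℝ)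
    (hR : Rᵀ = R) (hRidem : R * R = R) (j : Fin p) : 0 ≤ (Vᵀ * R * V) j j := by
  have hRV : R * (R * V) = R * V := by rw [← Matrix.mul_assoc, hRidem]
  have h1 : (R * V)ᵀ * (R * V) = Vᵀ * R * V := by
    rw [Matrix.transpose_mul, hR, Matrix.mul_assoc, hRV, ← Matrix.mul_assoc]
  rw [← h1, Matrix.mul_apply]
  refine Finset.sum_nonneg fun i _ => ?_
  rw [Matrix.transpose_apply]
  exact mul_self_nonneg _

/-- for any positive convex weights `α_1, …, α_d` (positive, summing to 1),
the eigenflag of `S = (1/n) X Xᵀ` minimizes the weighted flag-tricked PCA criterion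
`‖X − ∑ₖ α_k Π_{S_k} X‖_F²` over all flags of signature `(p, q_{1:d})`. -/
theorem flag_trick_pca_weighted_eigenflag_minimizes
    {p n d : ℕ} (hp : 2 ≤ p) (hn : 1 ≤ n) (hd : 1 ≤ d)
    (q : ℕ → ℕ) (hq1 : 0 < q 1)
    (hmono : ∀ k, 1 ≤ k → k < d → q k < q (k + 1)) (hqd : q d < p)
    (X : Matrix (Fin p) (Fin n) ℝ)
    (ℓ : Fin p → ℝ) (V : Matrix (Fin p) (Fin p) ℝ)
    (hV : Vᵀ * V = 1)
    (hsort : ∀ i j : Fin p, i ≤ j → ℓ j ≤ ℓ i)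
    (hS : ((1 : ℝ) / n) • (X * Xᵀ) = V * Matrix.diagonal ℓ * Vᵀ)
    (α : ℕ → ℝ) (hα : ∀ k, 1 ≤ k → k ≤ d → 0 < α k)
    (hαsum : ∑ k ∈ Finset.Icc 1 d, α k = 1)
    (P : ℕ → Matrix (Fin p) (Fin p) ℝ)
    (hP : IsProjFlag p d q P) :
    frobSq (X - ∑ k ∈ Finset.Icc 1 d, α k • (P k * X)) ≥
      frobSq (X - ∑ k ∈ Finset.Icc 1 d, α k • (leadProj V (q k) * X)) := by
  obtain ⟨hPsym, hPidem, hPrank, hPflag⟩ := hP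
  have hn0 : (n : ℝ) ≠ 0 := Nat.cast_ne_zero.mpr (by omega)
  have hnpos : (0:ℝ) ≤ (n : ℝ) := Nat.cast_nonneg n
  have hTdec : X * Xᵀ = (n : ℝ) • (V * Matrix.diagonal ℓ * Vᵀ) := by
    rw [← hS, smul_smul, mul_one_div, div_self hn0, one_smul]
  have hVVT : V * Vᵀ = 1 := mul_eq_one_comm.mp hV
  have hqmono := ftpca_q_mono d q hmono
  have hqltp : ∀ k, 1 ≤ k → k ≤ d → q k < p := fun k hk hkd =>
    lt_of_le_of_lt (hqmono k d hk hkd le_rfl) hqd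
  -- conjugation facts
  have hconj_mul : ∀ A B : Matrix (Fin p) (Fin p) ℝ,
      (V * A * Vᵀ) * (V * B * Vᵀ) = V * (A * B) * Vᵀ := by
    intro A B
    calc (V * A * Vᵀ) * (V * B * Vᵀ) = V * A * (Vᵀ * V) * (B * Vᵀ) := by
          simp only [Matrix.mul_assoc]
      _ = V * (A * B) * Vᵀ := by rw [hV, Matrix.mul_one]; simp only [Matrix.mul_assoc]
  have hconj_trace : ∀ A : Matrix (Fin p) (Fin p) ℝ,
      Matrix.trace (V * A * Vᵀ) = Matrix.trace A := by
    intro A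
    rw [Matrix.trace_mul_cycle, hV, Matrix.one_mul]
  -- the value of the eigenflag traces
  have hg : ∀ a : ℕ, Matrix.trace (leadProj V a * (X * Xᵀ))
      = (n : ℝ) * ∑ j : Fin p, (if (j:ℕ) < a then ℓ j else 0) := by
    intro a
    rw [hTdec, Matrix.mul_smul, Matrix.trace_smul, smul_eq_mul, ftpca_leadProj_eq,
      hconj_mul, hconj_trace]
    congr 1
    rw [indDiag, Matrix.diagonal_mul_diagonal, Matrix.trace_diagonal]
    refine Finset.sum_congr rfl fun j _ => ?_
    split_ifs <;> ring
  -- Ky Fan bound for the arbitrary flag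
  have hf_le : ∀ k, 1 ≤ k → k ≤ d → Matrix.trace (P k * (X * Xᵀ))
      ≤ (n : ℝ) * ∑ j : Fin p, (if (j:ℕ) < q k then ℓ j else 0) := by
    intro k hk hkd
    have hsymk : (P k)ᵀ = P k := (hPsym k hk hkd).eq
    have hidemk := hPidem k hk hkd
    set c : Fin p → ℝ := fun j => (Vᵀ * P k * V) j j with hc
    have hc0 : ∀ j, 0 ≤ c j := fun j => ftpca_diag_conj_nonneg V (P k) hsymk hidemk j
    have hc1 : ∀ j, c j ≤ 1 := by
      intro j
      have hQT : (1 - P k)ᵀ = 1 - P k := by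
        rw [Matrix.transpose_sub, Matrix.transpose_one, hsymk]
      have hQidem : (1 - P k) * (1 - P k) = 1 - P k := by
        simp only [Matrix.sub_mul, Matrix.mul_sub, Matrix.one_mul, Matrix.mul_one, hidemk]
        abel
      have h0 := ftpca_diag_conj_nonneg V (1 - P k) hQT hQidem j
      have hdec : Vᵀ * (1 - P k) * V = 1 - Vᵀ * P k * V := by
        rw [Matrix.mul_sub, Matrix.mul_one, Matrix.sub_mul, hV]
      rw [hdec, Matrix.sub_apply, Matrix.one_apply_eq] at h0
      have : (Vᵀ * P k * V) j j = c j := rfl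
      linarith [h0]
    have hcsum : ∑ j, c j = (q k : ℝ) := by
      have h1 : ∑ j, c j = Matrix.trace (Vᵀ * P k * V) := by
        rw [Matrix.trace]
        rfl
      rw [h1, Matrix.trace_mul_cycle, hVVT, Matrix.one_mul,
        ftpca_trace_idem_rank (P k) hidemk, hPrank k hk hkd]
    have hfc : Matrix.trace (P k * (X * Xᵀ)) = (n : ℝ) * ∑ j, ℓ j * c j := by
      rw [hTdec, Matrix.mul_smul, Matrix.trace_smul, smul_eq_mul]
      congr 1
      have h3 : P k * (V * Matrix.diagonal ℓ * Vᵀ) = (P k * (V * Matrix.diagonal ℓ)) * Vᵀ := by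
        simp only [Matrix.mul_assoc]
      rw [h3, Matrix.trace_mul_comm]
      have h4 : Vᵀ * (P k * (V * Matrix.diagonal ℓ)) = (Vᵀ * P k * V) * Matrix.diagonal ℓ := by
        simp only [Matrix.mul_assoc]
      rw [h4, ftpca_trace_mul_diag]
      refine Finset.sum_congr rfl fun j _ => ?_
      rw [hc]
      ring
    rw [hfc]
    exact mul_le_mul_of_nonneg_left
      (ftpca_kyfan_scalar (hqltp k hk hkd) ℓ c hsort hc0 hc1 hcsum) hnpos
  -- flag cross products
  have hcrossP : ∀ k l, 1 ≤ k → k ≤ d → 1 ≤ l → l ≤ d → P k * P l = P (min k l) := by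
    intro k l hk hkd hl hld
    rcases le_total k l with h | h
    · have h1 := hPflag k l hk h hld
      have p1 : P k * P l = (P l * P k)ᵀ := by
        rw [Matrix.transpose_mul, (hPsym k hk hkd).eq, (hPsym l hl hld).eq]
      rw [p1, h1, (hPsym k hk hkd).eq, min_eq_left h]
    · have h1 := hPflag l k hl h hkd
      rw [h1, min_eq_right h]
  have hcrossQ : ∀ k l, 1 ≤ k → k ≤ d → 1 ≤ l → l ≤ d →
      leadProj V (q k) * leadProj V (q l) = leadProj V (q (min k l)) := by
    intro k l hk hkd hl hld
    rw [ftpca_leadProj_eq, ftpca_leadProj_eq, ftpca_leadProj_eq, hconj_mul, ftpca_indDiag_mul]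
    congr 2
    rcases le_total k l with h | h
    · rw [min_eq_left h, min_eq_left (hqmono k l hk h hld)]
    · rw [min_eq_right h, min_eq_right (hqmono l k hl h hkd)]
  -- expansions
  have hsymQ : ∀ k ∈ Finset.Icc 1 d, (leadProj V (q k))ᵀ = leadProj V (q k) := by
    intro k _
    rw [ftpca_leadProj_eq, Matrix.transpose_mul, Matrix.transpose_mul,
      Matrix.transpose_transpose, indDiag, Matrix.diagonal_transpose, ← indDiag,
      Matrix.mul_assoc]
  have hsymP : ∀ k ∈ Finset.Icc 1 d, (P k)ᵀ = P k := by
    intro k hk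
    rw [Finset.mem_Icc] at hk
    exact (hPsym k hk.1 hk.2).eq
  rw [ftpca_expand X α P hsymP, ftpca_expand X α (fun k => leadProj V (q k)) hsymQ]
  have hrw1 : ∑ k ∈ Finset.Icc 1 d, ∑ l ∈ Finset.Icc 1 d,
        α k * α l * Matrix.trace (P k * P l * (X * Xᵀ))
      = ∑ k ∈ Finset.Icc 1 d, ∑ l ∈ Finset.Icc 1 d,
        α k * α l * Matrix.trace (P (min k l) * (X * Xᵀ)) := by
    refine Finset.sum_congr rfl fun k hk => Finset.sum_congr rfl fun l hl => ?_
    rw [Finset.mem_Icc] at hk hl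
    rw [hcrossP k l hk.1 hk.2 hl.1 hl.2]
  have hrw2 : ∑ k ∈ Finset.Icc 1 d, ∑ l ∈ Finset.Icc 1 d,
        α k * α l * Matrix.trace (leadProj V (q k) * leadProj V (q l) * (X * Xᵀ))
      = ∑ k ∈ Finset.Icc 1 d, ∑ l ∈ Finset.Icc 1 d,
        α k * α l * Matrix.trace (leadProj V (q (min k l)) * (X * Xᵀ)) := by
    refine Finset.sum_congr rfl fun k hk => Finset.sum_congr rfl fun l hl => ?_
    rw [Finset.mem_Icc] at hk hl
    rw [hcrossQ k l hk.1 hk.2 hl.1 hl.2]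
  rw [hrw1, hrw2]
  have hD : ∀ k ∈ Finset.Icc 1 d,
      Matrix.trace (P k * (X * Xᵀ)) ≤ Matrix.trace (leadProj V (q k) * (X * Xᵀ)) := by
    intro k hk
    rw [Finset.mem_Icc] at hk
    calc Matrix.trace (P k * (X * Xᵀ))
        ≤ (n : ℝ) * ∑ j : Fin p, (if (j:ℕ) < q k then ℓ j else 0) := hf_le k hk.1 hk.2
      _ = Matrix.trace (leadProj V (q k) * (X * Xᵀ)) := (hg (q k)).symm
  have hαnn : ∀ k ∈ Finset.Icc 1 d, 0 ≤ α k := by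
    intro k hk; rw [Finset.mem_Icc] at hk; exact (hα k hk.1 hk.2).le
  have hsum1 : ∑ k ∈ Finset.Icc 1 d, ∑ l ∈ Finset.Icc 1 d,
        α k * α l * (Matrix.trace (leadProj V (q (min k l)) * (X * Xᵀ))
          - Matrix.trace (P (min k l) * (X * Xᵀ)))
      ≤ ∑ k ∈ Finset.Icc 1 d, ∑ l ∈ Finset.Icc 1 d,
        α k * α l * ((Matrix.trace (leadProj V (q k) * (X * Xᵀ))
            - Matrix.trace (P k * (X * Xᵀ)))
          + (Matrix.trace (leadProj V (q l) * (X * Xᵀ))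
            - Matrix.trace (P l * (X * Xᵀ)))) := by
    refine Finset.sum_le_sum fun k hk => Finset.sum_le_sum fun l hl => ?_
    refine mul_le_mul_of_nonneg_left ?_ (mul_nonneg (hαnn k hk) (hαnn l hl))
    have h1 := hD k hk
    have h2 := hD l hl
    rcases le_total k l with h | h
    · rw [min_eq_left h]; linarith
    · rw [min_eq_right h]; linarith
  have hsum2 : ∑ k ∈ Finset.Icc 1 d, ∑ l ∈ Finset.Icc 1 d,
        α k * α l * ((Matrix.trace (leadProj V (q k) * (X * Xᵀ))
            - Matrix.trace (P k * (X * Xᵀ)))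
          + (Matrix.trace (leadProj V (q l) * (X * Xᵀ))
            - Matrix.trace (P l * (X * Xᵀ))))
      = 2 * ∑ k ∈ Finset.Icc 1 d,
          α k * (Matrix.trace (leadProj V (q k) * (X * Xᵀ))
            - Matrix.trace (P k * (X * Xᵀ))) := by
    have e1 : ∀ k, ∑ l ∈ Finset.Icc 1 d,
          α k * α l * ((Matrix.trace (leadProj V (q k) * (X * Xᵀ))
              - Matrix.trace (P k * (X * Xᵀ)))
            + (Matrix.trace (leadProj V (q l) * (X * Xᵀ))
              - Matrix.trace (P l * (X * Xᵀ))))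
        = α k * (Matrix.trace (leadProj V (q k) * (X * Xᵀ))
              - Matrix.trace (P k * (X * Xᵀ))) * (∑ l ∈ Finset.Icc 1 d, α l)
          + α k * (∑ l ∈ Finset.Icc 1 d,
              α l * (Matrix.trace (leadProj V (q l) * (X * Xᵀ))
                - Matrix.trace (P l * (X * Xᵀ)))) := by
      intro k
      rw [Finset.mul_sum, Finset.mul_sum, ← Finset.sum_add_distrib]
      refine Finset.sum_congr rfl fun l _ => ?_
      ring
    rw [Finset.sum_congr rfl fun k _ => e1 k]
    rw [Finset.sum_add_distrib, hαsum]
    simp only [mul_one]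
    rw [← Finset.sum_mul, hαsum, one_mul]
    ring
  have conv1 : ∑ k ∈ Finset.Icc 1 d, ∑ l ∈ Finset.Icc 1 d,
        α k * α l * (Matrix.trace (leadProj V (q (min k l)) * (X * Xᵀ))
          - Matrix.trace (P (min k l) * (X * Xᵀ)))
      = (∑ k ∈ Finset.Icc 1 d, ∑ l ∈ Finset.Icc 1 d,
          α k * α l * Matrix.trace (leadProj V (q (min k l)) * (X * Xᵀ)))
        - ∑ k ∈ Finset.Icc 1 d, ∑ l ∈ Finset.Icc 1 d,
          α k * α l * Matrix.trace (P (min k l) * (X * Xᵀ)) := by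
    simp only [mul_sub, Finset.sum_sub_distrib]
  have conv2 : ∑ k ∈ Finset.Icc 1 d,
        α k * (Matrix.trace (leadProj V (q k) * (X * Xᵀ))
          - Matrix.trace (P k * (X * Xᵀ)))
      = (∑ k ∈ Finset.Icc 1 d, α k * Matrix.trace (leadProj V (q k) * (X * Xᵀ)))
        - ∑ k ∈ Finset.Icc 1 d, α k * Matrix.trace (P k * (X * Xᵀ)) := by
    simp only [mul_sub, Finset.sum_sub_distrib]
  rw [conv1] at hsum1
  rw [conv2] at hsum2
  linarith [hsum1, hsum2]
end

section
/- Let S_1 ⊆ ... ⊆ S_d be a flag of subspaces of ℝ^p of signature (p, q_{1:d}), let U = [U_1 ⋯ U_{d+1}] ∈ O(p) be an orthogonal representative, and write U_{1:d} = [U_1 ⋯ U_d] ∈ ℝ^{p×q_d}. Then for every x ∈ ℝ^p, ‖x − (1/d) Σ_{k=1}^d Π_{S_k} x‖_2 = sqrt( ‖x‖_2² − ‖U_{1:d}ᵀ x‖_2² + Σ_{k=1}^d ((k−1)/d)² ‖U_kᵀ x‖_2² ). -/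
open Matrix Finset

/-- The matrix `U_l U_lᵀ`, where `U_l` is the `l`-th block of columns of `U`
(columns `j` with `q (l-1) ≤ j < q l`, 0-indexed). -/
noncomputable def blockOuter {p : ℕ} (U : Matrix (Fin p) (Fin p) ℝ) (q : ℕ → ℕ) (l : ℕ) :
    Matrix (Fin p) (Fin p) ℝ :=
  ∑ j ∈ Finset.univ.filter (fun j : Fin p => q (l - 1) ≤ (j : ℕ) ∧ (j : ℕ) < q l),
    colOuter U j

/-- for any `x ∈ ℝ^p` and an orthogonal representative
`U = [U_1 ⋯ U_{d+1}]` of a flag of signature `(p, q_{1:d})`,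
`‖x − (1/d) ∑ₖ Π_{S_k} x‖₂ = √(‖x‖₂² − ‖U_{1:d}ᵀ x‖₂² + ∑ₖ ((k−1)/d)² ‖U_kᵀ x‖₂²)`. -/
theorem flag_residual_norm_formula
    {p d : ℕ} (hd : 1 ≤ d)
    (q : ℕ → ℕ) (hq0 : q 0 = 0) (hq1 : 0 < q 1)
    (hmono : ∀ k, 1 ≤ k → k < d → q k < q (k + 1)) (hqd : q d < p)
    (hqtop : q (d + 1) = p)
    (P : ℕ → Matrix (Fin p) (Fin p) ℝ) (hP : IsProjFlag p d q P)
    (U : Matrix (Fin p) (Fin p) ℝ) (hU : Uᵀ * U = 1)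
    (hrep : ∀ k, 1 ≤ k → k ≤ d → P k = leadProj U (q k))
    (x : Fin p → ℝ) :
    Real.sqrt (∑ i, (x i - ((1 : ℝ) / d) *
        (∑ k ∈ Finset.Icc 1 d, (P k).mulVec x) i) ^ 2)
      = Real.sqrt ((∑ i, x i ^ 2)
          - (∑ j ∈ Finset.univ.filter (fun j : Fin p => (j : ℕ) < q d),
              (∑ i, U i j * x i) ^ 2)
          + ∑ k ∈ Finset.Icc 1 d, (((k : ℝ) - 1) / d) ^ 2 *
              ∑ j ∈ Finset.univ.filter
                  (fun j : Fin p => q (k - 1) ≤ (j : ℕ) ∧ (j : ℕ) < q k),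
                (∑ i, U i j * x i) ^ 2) := by
  have hdR : (d : ℝ) ≠ 0 := by positivity
  -- monotonicity of q on [0, d]
  have qstep : ∀ m, m + 1 ≤ d → q m ≤ q (m + 1) := by
    intro m hm
    rcases Nat.eq_zero_or_pos m with h | h
    · subst h; rw [hq0]; exact Nat.zero_le _
    · exact (hmono m h (by omega)).le
  have qmono : ∀ k l, k ≤ l → l ≤ d → q k ≤ q l := by
    have main : ∀ l, l ≤ d → ∀ k, k ≤ l → q k ≤ q l := by
      intro l
      induction l with
      | zero => intro _ k hk
                have hk0 : k = 0 := Nat.le_zero.mp hk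
                rw [hk0]
      | succ m ih =>
        intro hld k hk
        rcases Nat.lt_or_ge k (m + 1) with h | h
        · exact (ih (by omega) k (by omega)).trans (qstep m hld)
        · have hkm : k = m + 1 := by omega
          rw [hkm]
    intro k l hkl hld
    exact main l hld k hkl
  set c : Fin p → ℝ := fun j => ∑ i, U i j * x i with hc
  have ortho : ∀ j j' : Fin p, ∑ i, U i j * U i j' = if j = j' then 1 else 0 := by
    intro j j'
    have := congrFun (congrFun hU j) j'
    simpa [Matrix.mul_apply, Matrix.transpose_apply, Matrix.one_apply] using this
  have hUUT : U * Uᵀ = 1 := mul_eq_one_comm.mp hU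
  have ortho2 : ∀ i i' : Fin p, ∑ j, U i j * U i' j = if i = i' then 1 else 0 := by
    intro i i'
    have := congrFun (congrFun hUUT i) i'
    simpa [Matrix.mul_apply, Matrix.transpose_apply, Matrix.one_apply] using this
  -- x in terms of c
  have hxU : ∀ i, ∑ j, U i j * c j = x i := by
    intro i
    calc ∑ j, U i j * c j = ∑ j, ∑ i', (U i j * U i' j) * x i' := by
          refine Finset.sum_congr rfl fun j _ => ?_
          rw [hc, Finset.mul_sum]
          exact Finset.sum_congr rfl fun i' _ => by ring
      _ = ∑ i', (∑ j, U i j * U i' j) * x i' := by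
          rw [Finset.sum_comm]
          exact Finset.sum_congr rfl fun i' _ => by rw [Finset.sum_mul]
      _ = x i := by simp [ortho2]
  -- norm preservation
  have norm_pres : ∀ a : Fin p → ℝ, ∑ i, (∑ j, U i j * a j) ^ 2 = ∑ j, a j ^ 2 := by
    intro a
    calc ∑ i, (∑ j, U i j * a j) ^ 2
        = ∑ i, ∑ j, ∑ j', (U i j * a j) * (U i j' * a j') := by
          refine Finset.sum_congr rfl fun i _ => ?_
          rw [sq, Finset.sum_mul_sum]
      _ = ∑ j, ∑ j', (a j * a j') * ∑ i, U i j * U i j' := by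
          rw [Finset.sum_comm]
          refine Finset.sum_congr rfl fun j _ => ?_
          rw [Finset.sum_comm]
          refine Finset.sum_congr rfl fun j' _ => ?_
          rw [Finset.mul_sum]
          exact Finset.sum_congr rfl fun i _ => by ring
      _ = ∑ j, a j ^ 2 := by
          refine Finset.sum_congr rfl fun j _ => ?_
          simp [ortho, mul_ite, Finset.sum_ite_eq]
          ring
  -- multiplicity
  set N : Fin p → ℕ := fun j => ((Finset.Icc 1 d).filter (fun k => (j : ℕ) < q k)).card with hN
  set w : Fin p → ℝ := fun j => 1 - (N j : ℝ) / d with hw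
  -- projection applied
  have hPx : ∀ k, 1 ≤ k → k ≤ d → ∀ i, ((P k).mulVec x) i
      = ∑ j ∈ Finset.univ.filter (fun j : Fin p => (j : ℕ) < q k), U i j * c j := by
    intro k hk1 hkd i
    rw [hrep k hk1 hkd]
    simp only [leadProj, colOuter]
    show ∑ i', (∑ j ∈ Finset.univ.filter (fun j : Fin p => (j : ℕ) < q k),
        Matrix.vecMulVec (fun i => U i j) (fun i => U i j)) i i' * x i' = _
    calc ∑ i', (∑ j ∈ Finset.univ.filter (fun j : Fin p => (j : ℕ) < q k),
            Matrix.vecMulVec (fun i => U i j) (fun i => U i j)) i i' * x i'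
        = ∑ i', ∑ j ∈ Finset.univ.filter (fun j : Fin p => (j : ℕ) < q k),
            U i j * (U i' j * x i') := by
          refine Finset.sum_congr rfl fun i' _ => ?_
          rw [Matrix.sum_apply, Finset.sum_mul]
          refine Finset.sum_congr rfl fun j _ => ?_
          rw [Matrix.vecMulVec_apply]
          ring
      _ = ∑ j ∈ Finset.univ.filter (fun j : Fin p => (j : ℕ) < q k),
            ∑ i', U i j * (U i' j * x i') := Finset.sum_comm
      _ = _ := by
          refine Finset.sum_congr rfl fun j _ => ?_
          rw [hc, ← Finset.mul_sum]
  -- residual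
  have hres : ∀ i, x i - ((1 : ℝ) / d) * (∑ k ∈ Finset.Icc 1 d, (P k).mulVec x) i
      = ∑ j, U i j * (c j * w j) := by
    intro i
    have h1 : (∑ k ∈ Finset.Icc 1 d, (P k).mulVec x) i
        = ∑ j : Fin p, (N j : ℝ) * (U i j * c j) := by
      rw [Finset.sum_apply]
      calc ∑ k ∈ Finset.Icc 1 d, ((P k).mulVec x) i
          = ∑ k ∈ Finset.Icc 1 d, ∑ j : Fin p, if (j : ℕ) < q k then U i j * c j else 0 := by
            refine Finset.sum_congr rfl fun k hk => ?_
            rw [Finset.mem_Icc] at hk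
            rw [hPx k hk.1 hk.2 i, Finset.sum_filter]
        _ = ∑ j : Fin p, ∑ k ∈ Finset.Icc 1 d, if (j : ℕ) < q k then U i j * c j else 0 :=
            Finset.sum_comm
        _ = ∑ j : Fin p, (N j : ℝ) * (U i j * c j) := by
            refine Finset.sum_congr rfl fun j _ => ?_
            rw [← Finset.sum_filter, Finset.sum_const, hN, nsmul_eq_mul]
    rw [h1, Finset.mul_sum, ← hxU i, ← Finset.sum_sub_distrib]
    refine Finset.sum_congr rfl fun j _ => ?_
    rw [hw]
    field_simp
  -- second term rewrite
  have key : ∑ j, (c j * w j) ^ 2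
      = (∑ j, c j ^ 2)
        - (∑ j ∈ Finset.univ.filter (fun j : Fin p => (j : ℕ) < q d), c j ^ 2)
        + ∑ k ∈ Finset.Icc 1 d, (((k : ℝ) - 1) / d) ^ 2 *
            ∑ j ∈ Finset.univ.filter
                (fun j : Fin p => q (k - 1) ≤ (j : ℕ) ∧ (j : ℕ) < q k), c j ^ 2 := by
    have h3 : ∑ k ∈ Finset.Icc 1 d, (((k : ℝ) - 1) / d) ^ 2 *
            ∑ j ∈ Finset.univ.filter
                (fun j : Fin p => q (k - 1) ≤ (j : ℕ) ∧ (j : ℕ) < q k), c j ^ 2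
        = ∑ j : Fin p, ∑ k ∈ (Finset.Icc 1 d).filter
            (fun k => q (k - 1) ≤ (j : ℕ) ∧ (j : ℕ) < q k),
            (((k : ℝ) - 1) / d) ^ 2 * c j ^ 2 := by
      calc ∑ k ∈ Finset.Icc 1 d, (((k : ℝ) - 1) / d) ^ 2 *
              ∑ j ∈ Finset.univ.filter
                  (fun j : Fin p => q (k - 1) ≤ (j : ℕ) ∧ (j : ℕ) < q k), c j ^ 2
          = ∑ k ∈ Finset.Icc 1 d, ∑ j : Fin p,
              if q (k - 1) ≤ (j : ℕ) ∧ (j : ℕ) < q k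
              then (((k : ℝ) - 1) / d) ^ 2 * c j ^ 2 else 0 := by
            refine Finset.sum_congr rfl fun k _ => ?_
            rw [Finset.sum_filter, Finset.mul_sum]
            refine Finset.sum_congr rfl fun j _ => ?_
            split <;> simp
        _ = ∑ j : Fin p, ∑ k ∈ Finset.Icc 1 d,
              if q (k - 1) ≤ (j : ℕ) ∧ (j : ℕ) < q k
              then (((k : ℝ) - 1) / d) ^ 2 * c j ^ 2 else 0 := Finset.sum_comm
        _ = _ := by
            refine Finset.sum_congr rfl fun j _ => ?_
            rw [Finset.sum_filter]
    rw [h3, Finset.sum_filter (fun j : Fin p => (j : ℕ) < q d) (fun j => c j ^ 2),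
      ← Finset.sum_sub_distrib, ← Finset.sum_add_distrib]
    refine Finset.sum_congr rfl fun j _ => ?_
    by_cases hj : (j : ℕ) < q d
    · -- find minimal k
      have hex : ∃ k, (j : ℕ) < q k := ⟨d, hj⟩
      set k₀ := Nat.find hex with hk₀def
      have hjk₀ : (j : ℕ) < q k₀ := Nat.find_spec hex
      have hk₀d : k₀ ≤ d := Nat.find_le hj
      have hk₀1 : 1 ≤ k₀ := by
        rcases Nat.eq_zero_or_pos k₀ with h | h
        · rw [h] at hjk₀; omega
        · exact h
      have hjlow : q (k₀ - 1) ≤ (j : ℕ) := by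
        by_contra hcon
        push_neg at hcon
        exact absurd hcon (Nat.find_min hex (by omega))
      have hfilt1 : (Finset.Icc 1 d).filter (fun k => (j : ℕ) < q k) = Finset.Icc k₀ d := by
        ext k
        simp only [Finset.mem_filter, Finset.mem_Icc]
        constructor
        · rintro ⟨⟨hk1, hkd⟩, hjk⟩
          refine ⟨?_, hkd⟩
          by_contra hcon
          push_neg at hcon
          exact absurd hjk (Nat.find_min hex hcon)
        · rintro ⟨hk0k, hkd⟩
          exact ⟨⟨by omega, hkd⟩, lt_of_lt_of_le hjk₀ (qmono k₀ k hk0k hkd)⟩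
      have hNj : N j = d + 1 - k₀ := by
        rw [hN]
        simp only
        rw [hfilt1, Nat.card_Icc]
      have hwj : w j = ((k₀ : ℝ) - 1) / d := by
        rw [hw]
        simp only
        rw [hNj]
        have : ((d + 1 - k₀ : ℕ) : ℝ) = (d : ℝ) + 1 - k₀ := by
          push_cast [Nat.cast_sub (by omega : k₀ ≤ d + 1)]
          ring
        rw [this]
        field_simp
        ring
      have hfilt2 : (Finset.Icc 1 d).filter
          (fun k => q (k - 1) ≤ (j : ℕ) ∧ (j : ℕ) < q k) = {k₀} := by
        ext k
        simp only [Finset.mem_filter, Finset.mem_Icc, Finset.mem_singleton]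
        constructor
        · rintro ⟨⟨hk1, hkd⟩, hlow, hhigh⟩
          have hk0k : k₀ ≤ k := by
            by_contra hcon
            push_neg at hcon
            exact absurd hhigh (Nat.find_min hex hcon)
          by_contra hne
          have hk0lt : k₀ ≤ k - 1 := by omega
          have : q k₀ ≤ q (k - 1) := qmono k₀ (k - 1) hk0lt (by omega)
          omega
        · rintro rfl
          exact ⟨⟨hk₀1, hk₀d⟩, hjlow, hjk₀⟩
      rw [hfilt2, Finset.sum_singleton, if_pos hj, hwj]
      ring
    · -- j ≥ q d : N j = 0
      have hNj : N j = 0 := by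
        rw [hN]
        simp only [Finset.card_eq_zero, Finset.filter_eq_empty_iff]
        intro k hk
        rw [Finset.mem_Icc] at hk
        have := qmono k d hk.2 le_rfl
        omega
      have hwj : w j = 1 := by rw [hw]; simp [hNj]
      have hfilt2 : (Finset.Icc 1 d).filter
          (fun k => q (k - 1) ≤ (j : ℕ) ∧ (j : ℕ) < q k) = ∅ := by
        rw [Finset.filter_eq_empty_iff]
        intro k hk
        rw [Finset.mem_Icc] at hk
        have := qmono k d hk.2 le_rfl
        omega
      rw [hfilt2, Finset.sum_empty, if_neg hj, hwj]
      ring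
  -- finish
  have hx2 : ∑ i, x i ^ 2 = ∑ j, c j ^ 2 := by
    rw [← norm_pres c]
    exact Finset.sum_congr rfl fun i _ => by rw [hxU i]
  have hLHS : ∑ i, (x i - ((1 : ℝ) / d) *
      (∑ k ∈ Finset.Icc 1 d, (P k).mulVec x) i) ^ 2 = ∑ j, (c j * w j) ^ 2 := by
    rw [← norm_pres (fun j => c j * w j)]
    exact Finset.sum_congr rfl fun i _ => by rw [hres i]
  rw [hLHS, key, hx2]
end

section
/- Let S_1 ⊆ ... ⊆ S_d be a flag of subspaces of ℝ^p of signature (p, q_{1:d}) and let U = [U_1 ⋯ U_{d+1}] ∈ O(p) be an orthogonal representative. Then for every x ∈ ℝ^p, ‖x − (1/d) Σ_{k=1}^d Π_{S_k} x‖_2² = Σ_{k=1}^{d+1} ((k−1)/d)² · ‖U_kᵀ x‖_2². -/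
open Matrix Finset

lemma sum_sq_orthocols {p : ℕ} (U : Matrix (Fin p) (Fin p) ℝ) (hU : Uᵀ * U = 1)
    (a : Fin p → ℝ) :
    ∑ i, (∑ j, a j * U i j) ^ 2 = ∑ j, a j ^ 2 := by
  have hcol : ∀ j j' : Fin p, (∑ i, U i j * U i j') = if j = j' then (1:ℝ) else 0 := by
    intro j j'
    have := congrFun (congrFun hU j) j'
    simpa [Matrix.mul_apply, Matrix.transpose_apply, Matrix.one_apply] using this
  calc ∑ i, (∑ j, a j * U i j) ^ 2
      = ∑ i, ∑ j, ∑ j', (a j * U i j) * (a j' * U i j') := by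
        refine Finset.sum_congr rfl fun i _ => ?_
        rw [sq, Finset.sum_mul_sum]
    _ = ∑ j, ∑ j', (a j * a j') * ∑ i, U i j * U i j' := by
        rw [Finset.sum_comm]
        refine Finset.sum_congr rfl fun j _ => ?_
        rw [Finset.sum_comm]
        refine Finset.sum_congr rfl fun j' _ => ?_
        rw [Finset.mul_sum]
        exact Finset.sum_congr rfl fun i _ => by ring
    _ = ∑ j, a j ^ 2 := by
        simp [hcol, mul_ite, Finset.sum_ite_eq, sq]

/-- for any `x ∈ ℝ^p` and an orthogonal representative
`U = [U_1 ⋯ U_{d+1}]` of a flag of signature `(p, q_{1:d})`,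
`‖x − (1/d) ∑ₖ Π_{S_k} x‖₂² = ∑_{k=1}^{d+1} ((k−1)/d)² ‖U_kᵀ x‖₂²`. -/
theorem flag_residual_norm_sq_formula
    {p d : ℕ} (hd : 1 ≤ d)
    (q : ℕ → ℕ) (hq0 : q 0 = 0) (hq1 : 0 < q 1)
    (hmono : ∀ k, 1 ≤ k → k < d → q k < q (k + 1)) (hqd : q d < p)
    (hqtop : q (d + 1) = p)
    (P : ℕ → Matrix (Fin p) (Fin p) ℝ) (hP : IsProjFlag p d q P)
    (U : Matrix (Fin p) (Fin p) ℝ) (hU : Uᵀ * U = 1)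
    (hrep : ∀ k, 1 ≤ k → k ≤ d → P k = leadProj U (q k))
    (x : Fin p → ℝ) :
    ∑ i, (x i - ((1 : ℝ) / d) * (∑ k ∈ Finset.Icc 1 d, (P k).mulVec x) i) ^ 2
      = ∑ k ∈ Finset.Icc 1 (d + 1), (((k : ℝ) - 1) / d) ^ 2 *
          ∑ j ∈ Finset.univ.filter
              (fun j : Fin p => q (k - 1) ≤ (j : ℕ) ∧ (j : ℕ) < q k),
            (∑ i, U i j * x i) ^ 2 := by
  classical
  have hd0 : (d : ℝ) ≠ 0 := Nat.cast_ne_zero.mpr (by omega)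
  -- monotonicity of q on [0, d+1]
  have hstep : ∀ k, k < d + 1 → q k < q (k + 1) := by
    intro k hk
    rcases Nat.eq_zero_or_pos k with h0 | h1
    · subst h0; rw [hq0]; exact hq1
    · rcases lt_or_eq_of_le (Nat.lt_succ_iff.mp hk) with h | h
      · exact hmono k h1 h
      · subst h; rw [hqtop]; exact hqd
  have hlt : ∀ a b, a < b → b ≤ d + 1 → q a < q b := by
    intro a b hab hbd
    induction b with
    | zero => omega
    | succ n ih =>
      rcases Nat.lt_succ_iff_lt_or_eq.mp hab with h | h
      · exact (ih h (by omega)).trans (hstep n (by omega))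
      · subst h; exact hstep a (by omega)
  have hle : ∀ a b, a ≤ b → b ≤ d + 1 → q a ≤ q b := by
    intro a b hab hbd
    rcases eq_or_lt_of_le hab with h | h
    · subst h; exact le_rfl
    · exact (hlt a b h hbd).le
  set c : Fin p → ℝ := fun j => ∑ i, U i j * x i with hc
  set N : Fin p → ℕ :=
    fun j => ((Finset.Icc 1 d).filter (fun k => (j : ℕ) < q k)).card with hN
  -- block index
  have hex : ∀ j : Fin p, ∃ k, (j : ℕ) < q k := fun j => ⟨d + 1, by rw [hqtop]; exact j.isLt⟩
  set g : Fin p → ℕ := fun j => Nat.find (hex j) with hg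
  have hgsp : ∀ j : Fin p, (j : ℕ) < q (g j) := fun j => Nat.find_spec (hex j)
  have hg1 : ∀ j, 1 ≤ g j := by
    intro j
    by_contra h
    have h0 : g j = 0 := by omega
    have := hgsp j
    rw [h0, hq0] at this
    omega
  have hg2 : ∀ j, g j ≤ d + 1 := fun j => Nat.find_le (by rw [hqtop]; exact j.isLt)
  have hgmin : ∀ j, q (g j - 1) ≤ (j : ℕ) := by
    intro j
    have := Nat.find_min (hex j) (show g j - 1 < g j by have := hg1 j; omega)
    omega
  have hiff : ∀ (j : Fin p) (k : ℕ), 1 ≤ k → k ≤ d + 1 →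
      ((q (k - 1) ≤ (j : ℕ) ∧ (j : ℕ) < q k) ↔ g j = k) := by
    intro j k hk1 hk2
    constructor
    · rintro ⟨h1, h2⟩
      have hle' : g j ≤ k := Nat.find_le h2
      by_contra hne
      have hlt' : g j < k := lt_of_le_of_ne hle' hne
      have : q (g j) ≤ q (k - 1) := hle (g j) (k - 1) (by omega) (by omega)
      have := hgsp j
      omega
    · rintro rfl; exact ⟨hgmin j, hgsp j⟩
  -- N in terms of g
  have hNg : ∀ j, N j = d + 1 - g j := by
    intro j
    have hset : (Finset.Icc 1 d).filter (fun k => (j : ℕ) < q k) = Finset.Icc (g j) d := by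
      ext l
      simp only [Finset.mem_filter, Finset.mem_Icc]
      constructor
      · rintro ⟨⟨h1, h2⟩, h3⟩
        exact ⟨Nat.find_le h3, h2⟩
      · rintro ⟨h1, h2⟩
        refine ⟨⟨le_trans (hg1 j) h1, h2⟩, ?_⟩
        exact lt_of_lt_of_le (hgsp j) (hle (g j) l h1 (by omega))
    simp only [hN]
    rw [hset, Nat.card_Icc]
  -- orthonormality of columns
  have hcol : ∀ j j' : Fin p, (∑ i, U i j * U i j') = if j = j' then (1:ℝ) else 0 := by
    intro j j'
    have := congrFun (congrFun hU j) j'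
    simpa [Matrix.mul_apply, Matrix.transpose_apply, Matrix.one_apply] using this
  have hrow : U * Uᵀ = 1 := mul_eq_one_comm.mp hU
  -- expansion of x
  have hx : ∀ i, x i = ∑ j, c j * U i j := by
    intro i
    have h1 : ∑ i', (U * Uᵀ) i i' * x i' = x i := by
      simp [hrow, Matrix.one_apply]
    rw [← h1]
    simp_rw [Matrix.mul_apply, Matrix.transpose_apply, Finset.sum_mul]
    rw [Finset.sum_comm]
    refine Finset.sum_congr rfl fun j _ => ?_
    rw [hc]
    simp only []
    rw [Finset.sum_mul]
    exact Finset.sum_congr rfl fun i' _ => by ring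
  -- action of P k
  have hPx : ∀ k, 1 ≤ k → k ≤ d → ∀ i, (P k).mulVec x i
      = ∑ j ∈ Finset.univ.filter (fun j : Fin p => (j : ℕ) < q k), c j * U i j := by
    intro k hk1 hk2 i
    rw [hrep k hk1 hk2]
    simp only [leadProj, colOuter, Matrix.mulVec, dotProduct, Matrix.sum_apply,
      Matrix.vecMulVec_apply, Finset.sum_mul]
    rw [Finset.sum_comm]
    refine Finset.sum_congr rfl fun j _ => ?_
    rw [hc]
    simp only []
    rw [Finset.sum_mul]
    exact Finset.sum_congr rfl fun i' _ => by ring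
  -- the inner expression
  have hinner : ∀ i, x i - ((1 : ℝ) / d) * (∑ k ∈ Finset.Icc 1 d, (P k).mulVec x) i
      = ∑ j, ((1 - (N j : ℝ) / d) * c j) * U i j := by
    intro i
    have h2 : (∑ k ∈ Finset.Icc 1 d, (P k).mulVec x) i
        = ∑ j, (N j : ℝ) * (c j * U i j) := by
      rw [Finset.sum_apply]
      have e1 : ∀ k ∈ Finset.Icc 1 d, (P k).mulVec x i
          = ∑ j : Fin p, if (j : ℕ) < q k then c j * U i j else 0 := by
        intro k hk
        rw [Finset.mem_Icc] at hk
        rw [hPx k hk.1 hk.2 i, Finset.sum_filter]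
      rw [Finset.sum_congr rfl e1, Finset.sum_comm]
      refine Finset.sum_congr rfl fun j _ => ?_
      rw [← Finset.sum_filter, Finset.sum_const, nsmul_eq_mul]
    rw [h2, hx i, Finset.mul_sum, ← Finset.sum_sub_distrib]
    refine Finset.sum_congr rfl fun j _ => ?_
    ring
  calc ∑ i, (x i - ((1 : ℝ) / d) * (∑ k ∈ Finset.Icc 1 d, (P k).mulVec x) i) ^ 2
      = ∑ i, (∑ j, ((1 - (N j : ℝ) / d) * c j) * U i j) ^ 2 := by
        exact Finset.sum_congr rfl fun i _ => by rw [hinner i]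
    _ = ∑ j, ((1 - (N j : ℝ) / d) * c j) ^ 2 :=
        sum_sq_orthocols U hU _
    _ = ∑ k ∈ Finset.Icc 1 (d + 1), ∑ j ∈ Finset.univ.filter (fun j : Fin p => g j = k),
          ((1 - (N j : ℝ) / d) * c j) ^ 2 := by
        rw [Finset.sum_fiberwise_of_maps_to (fun j _ => Finset.mem_Icc.mpr ⟨hg1 j, hg2 j⟩)]
    _ = ∑ k ∈ Finset.Icc 1 (d + 1), (((k : ℝ) - 1) / d) ^ 2 *
          ∑ j ∈ Finset.univ.filter
              (fun j : Fin p => q (k - 1) ≤ (j : ℕ) ∧ (j : ℕ) < q k),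
            (∑ i, U i j * x i) ^ 2 := by
        refine Finset.sum_congr rfl fun k hk => ?_
        rw [Finset.mem_Icc] at hk
        have hfeq : Finset.univ.filter (fun j : Fin p => g j = k)
            = Finset.univ.filter (fun j : Fin p => q (k - 1) ≤ (j : ℕ) ∧ (j : ℕ) < q k) := by
          ext j
          simp only [Finset.mem_filter, Finset.mem_univ, true_and]
          exact (hiff j k hk.1 hk.2).symm
        rw [hfeq, Finset.mul_sum]
        refine Finset.sum_congr rfl fun j hj => ?_
        rw [Finset.mem_filter] at hj
        have hgj : g j = k := (hiff j k hk.1 hk.2).mp hj.2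
        have hNj : (N j : ℝ) = (d : ℝ) + 1 - (k : ℝ) := by
          rw [hNg j, hgj]
          have : (k : ℕ) ≤ d + 1 := hk.2
          push_cast [Nat.cast_sub this]
          ring
        have hcj : c j = ∑ i, U i j * x i := rfl
        rw [mul_pow, hNj, hcj]
        congr 1
        field_simp
        ring
end

section
/- Let A, B ∈ ℝ^{p×p} be symmetric positive semidefinite matrices with rank(B) > p − q_d, and let 0 < q_1 < ... < q_d < p be a signature. For ρ ∈ ℝ, let λ_1(A − ρB) ≥ ... ≥ λ_p(A − ρB) denote the eigenvalues of A − ρB in decreasing order, and define f(ρ) = Σ_{k=1}^d Σ_{j=1}^{q_k} λ_j(A − ρB). Then f is strictly decreasing on ℝ: for all ρ_1 < ρ_2, f(ρ_1) > f(ρ_2). -/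
open Matrix Finset

/-- `μ` is the decreasingly sorted spectrum of the (symmetric) matrix `M`:
`μ 0 ≥ μ 1 ≥ ⋯ ≥ μ (p-1)` and `M = V diag(μ) Vᵀ` for some orthogonal `V`. -/
def IsSortedSpectrum {p : ℕ} (M : Matrix (Fin p) (Fin p) ℝ) (μ : Fin p → ℝ) : Prop :=
  (∀ i j : Fin p, i ≤ j → μ j ≤ μ i) ∧
  ∃ V : Matrix (Fin p) (Fin p) ℝ, Vᵀ * V = 1 ∧ M = V * Matrix.diagonal μ * Vᵀ

lemma aux_card_filter_lt {p m : ℕ} (hm : m ≤ p) :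
    (Finset.univ.filter (fun j : Fin p => (j : ℕ) < m)).card = m := by
  have : (Finset.univ.filter (fun j : Fin p => (j : ℕ) < m))
      = Finset.map (Fin.castLEEmb hm) Finset.univ := by
    ext j
    simp only [mem_filter, mem_univ, true_and, Finset.mem_map, Fin.castLEEmb]
    constructor
    · intro h; exact ⟨⟨j, h⟩, by simp [Fin.castLE]⟩
    · rintro ⟨i, rfl⟩; simpa using i.2
  rw [this, Finset.card_map, Finset.card_univ, Fintype.card_fin]

lemma aux_conj_diag {p : ℕ} (M V : Matrix (Fin p) (Fin p) ℝ) (i : Fin p) :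
    (Vᵀ * M * V) i i = (fun r => V r i) ⬝ᵥ (M *ᵥ fun r => V r i) := by
  simp [Matrix.mul_apply, dotProduct, Matrix.mulVec, Finset.mul_sum, Finset.sum_mul]
  rw [Finset.sum_comm]
  refine Finset.sum_congr rfl fun j _ => Finset.sum_congr rfl fun k _ => by ring

/-- Ky Fan style rearrangement bound. -/
lemma aux_rearrange {p m : ℕ} (hm : m < p) (μ c : Fin p → ℝ)
    (hsort : ∀ i j : Fin p, i ≤ j → μ j ≤ μ i)
    (hc0 : ∀ j, 0 ≤ c j) (hc1 : ∀ j, c j ≤ 1)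
    (hsum : ∑ j, c j = (m : ℝ)) :
    ∑ j, μ j * c j ≤ ∑ j ∈ Finset.univ.filter (fun j : Fin p => (j : ℕ) < m), μ j := by
  set S := Finset.univ.filter (fun j : Fin p => (j : ℕ) < m) with hS
  set a := μ ⟨m, hm⟩ with ha
  have hcard : (S.card : ℝ) = (m : ℝ) := by
    rw [hS, aux_card_filter_lt hm.le]
  have hsplit : ∑ j, μ j * c j
      = ∑ j ∈ S, μ j * c j + ∑ j ∈ Finset.univ.filter
        (fun j : Fin p => ¬ (j : ℕ) < m), μ j * c j := by
    rw [hS, Finset.sum_filter_add_sum_filter_not]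
  have h1 : ∑ j ∈ S, μ j * c j ≤ ∑ j ∈ S, (μ j + a * (c j - 1)) := by
    refine Finset.sum_le_sum fun j hj => ?_
    have hj' : μ ⟨m, hm⟩ ≤ μ j := by
      refine hsort j ⟨m, hm⟩ ?_
      have : (j : ℕ) < m := (Finset.mem_filter.mp hj).2
      exact Fin.le_def.mpr (by simpa using this.le)
    nlinarith [hc1 j]
  have h2 : ∑ j ∈ Finset.univ.filter (fun j : Fin p => ¬ (j : ℕ) < m), μ j * c j
      ≤ ∑ j ∈ Finset.univ.filter (fun j : Fin p => ¬ (j : ℕ) < m), a * c j := by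
    refine Finset.sum_le_sum fun j hj => ?_
    have hj' : μ j ≤ a := by
      refine hsort ⟨m, hm⟩ j ?_
      have : m ≤ (j : ℕ) := Nat.not_lt.mp (Finset.mem_filter.mp hj).2
      exact Fin.le_def.mpr (by simpa using this)
    nlinarith [hc0 j]
  have h3 : ∑ j ∈ S, (μ j + a * (c j - 1))
        + ∑ j ∈ Finset.univ.filter (fun j : Fin p => ¬ (j : ℕ) < m), a * c j
      = ∑ j ∈ S, μ j + a * (∑ j, c j - S.card) := by
    rw [Finset.sum_add_distrib, ← Finset.mul_sum, ← Finset.mul_sum]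
    have : ∑ j ∈ S, (c j - 1) = ∑ j ∈ S, c j - S.card := by
      rw [Finset.sum_sub_distrib, Finset.sum_const, nsmul_eq_mul, mul_one]
    rw [this]
    have hsum2 : ∑ j ∈ S, c j + ∑ j ∈ Finset.univ.filter
        (fun j : Fin p => ¬ (j : ℕ) < m), c j = ∑ j, c j := by
      rw [hS, Finset.sum_filter_add_sum_filter_not]
    linear_combination a * hsum2
  calc ∑ j, μ j * c j
      ≤ ∑ j ∈ S, (μ j + a * (c j - 1))
        + ∑ j ∈ Finset.univ.filter (fun j : Fin p => ¬ (j : ℕ) < m), a * c j := by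
        rw [hsplit]; exact add_le_add h1 h2
    _ = ∑ j ∈ S, μ j + a * (∑ j, c j - S.card) := h3
    _ = ∑ j ∈ S, μ j := by rw [hsum, hcard]; ring


/-- for positive semidefinite `A, B` with `rank B > p − q_d`, the function
`f(ρ) = ∑_{k=1}^d ∑_{j=1}^{q_k} λ_j(A − ρB)` is strictly decreasing on `ℝ`. -/
theorem trace_ratio_newton_function_strictAnti
    {p d : ℕ} (hd : 1 ≤ d)
    (q : ℕ → ℕ) (hq1 : 0 < q 1)
    (hmono : ∀ k, 1 ≤ k → k < d → q k < q (k + 1)) (hqd : q d < p)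
    (A B : Matrix (Fin p) (Fin p) ℝ)
    (hA : A.PosSemidef) (hB : B.PosSemidef)
    (hrank : p - q d < B.rank)
    (ρ₁ ρ₂ : ℝ) (hρ : ρ₁ < ρ₂)
    (μ₁ μ₂ : Fin p → ℝ)
    (h₁ : IsSortedSpectrum (A - ρ₁ • B) μ₁)
    (h₂ : IsSortedSpectrum (A - ρ₂ • B) μ₂) :
    ∑ k ∈ Finset.Icc 1 d,
        ∑ j ∈ Finset.univ.filter (fun j : Fin p => (j : ℕ) < q k), μ₂ j
      < ∑ k ∈ Finset.Icc 1 d,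
          ∑ j ∈ Finset.univ.filter (fun j : Fin p => (j : ℕ) < q k), μ₁ j := by
  obtain ⟨hs₁, V₁, hV₁, hM₁⟩ := h₁
  obtain ⟨hs₂, V₂, hV₂, hM₂⟩ := h₂
  have hV₁' : V₁ * V₁ᵀ = 1 := mul_eq_one_comm.mp hV₁
  have hV₂' : V₂ * V₂ᵀ = 1 := mul_eq_one_comm.mp hV₂
  set t : ℝ := ρ₂ - ρ₁ with ht
  have htpos : 0 < t := sub_pos.mpr hρ
  set W : Matrix (Fin p) (Fin p) ℝ := V₁ᵀ * V₂ with hW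
  have hWT : Wᵀ = V₂ᵀ * V₁ := by rw [hW, Matrix.transpose_mul, Matrix.transpose_transpose]
  have hWW : Wᵀ * W = 1 := by
    rw [hWT, hW, Matrix.mul_assoc, ← Matrix.mul_assoc V₁, hV₁', Matrix.one_mul, hV₂]
  have hWW' : W * Wᵀ = 1 := mul_eq_one_comm.mp hWW
  set b : Fin p → ℝ := fun i => (V₂ᵀ * B * V₂) i i with hb
  have hb0 : ∀ i, 0 ≤ b i := by
    intro i
    show 0 ≤ (V₂ᵀ * B * V₂) i i
    rw [aux_conj_diag]
    have := hB.dotProduct_mulVec_nonneg (fun r => V₂ r i)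
    simpa using this
  -- the key pointwise identity
  have e2 : V₂ᵀ * (A - ρ₂ • B) * V₂ = diagonal μ₂ := by
    calc V₂ᵀ * (A - ρ₂ • B) * V₂ = (V₂ᵀ * V₂) * diagonal μ₂ * (V₂ᵀ * V₂) := by
          rw [hM₂]; noncomm_ring
      _ = diagonal μ₂ := by rw [hV₂, Matrix.one_mul, Matrix.mul_one]
  have e1 : V₂ᵀ * (A - ρ₁ • B) * V₂ = Wᵀ * diagonal μ₁ * W := by
    calc V₂ᵀ * (A - ρ₁ • B) * V₂ = (V₂ᵀ * V₁) * diagonal μ₁ * (V₁ᵀ * V₂) := by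
          rw [hM₁]; noncomm_ring
      _ = Wᵀ * diagonal μ₁ * W := by rw [hWT, hW]
  have e3 : (A - ρ₂ • B) = (A - ρ₁ • B) - t • B := by rw [ht, sub_smul]; abel
  have key : ∀ i : Fin p, μ₂ i = (Wᵀ * diagonal μ₁ * W) i i - t * b i := by
    intro i
    have : diagonal μ₂ = Wᵀ * diagonal μ₁ * W - t • (V₂ᵀ * B * V₂) := by
      rw [← e2, ← e1, e3, Matrix.mul_sub, Matrix.sub_mul, Matrix.mul_smul, Matrix.smul_mul]
    have h := congrFun (congrFun this i) i
    simp only [Matrix.diagonal_apply_eq, Matrix.sub_apply, Matrix.smul_apply, smul_eq_mul] at h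
    exact h
  have diagW : ∀ i : Fin p, (Wᵀ * diagonal μ₁ * W) i i = ∑ j, μ₁ j * (W j i) ^ 2 := by
    intro i
    rw [aux_conj_diag]
    simp only [dotProduct, Matrix.mulVec_diagonal]
    exact Finset.sum_congr rfl fun j _ => by ring
  -- per-index-set (Ky Fan) bound
  have perm : ∀ m : ℕ, m < p →
      ∑ i ∈ Finset.univ.filter (fun j : Fin p => (j : ℕ) < m), μ₂ i
        ≤ ∑ i ∈ Finset.univ.filter (fun j : Fin p => (j : ℕ) < m), μ₁ i
          - t * ∑ i ∈ Finset.univ.filter (fun j : Fin p => (j : ℕ) < m), b i := by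
    intro m hm
    set S := Finset.univ.filter (fun j : Fin p => (j : ℕ) < m) with hSdef
    set c : Fin p → ℝ := fun j => ∑ i ∈ S, (W j i) ^ 2 with hc
    have hc0 : ∀ j, 0 ≤ c j := fun j => Finset.sum_nonneg fun i _ => sq_nonneg _
    have hc1 : ∀ j, c j ≤ 1 := by
      intro j
      have h1 : c j ≤ ∑ i, (W j i) ^ 2 :=
        Finset.sum_le_sum_of_subset_of_nonneg (Finset.subset_univ S) fun i _ _ => sq_nonneg _
      have h2 : ∑ i, (W j i) ^ 2 = (W * Wᵀ) j j := by
        simp [Matrix.mul_apply, Matrix.transpose_apply, sq]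
      rw [h2, hWW'] at h1
      simpa [Matrix.one_apply] using h1
    have hcsum : ∑ j, c j = (m : ℝ) := by
      have hcomm : ∑ j, c j = ∑ i ∈ S, ∑ j, (W j i) ^ 2 := Finset.sum_comm
      rw [hcomm]
      have h3 : ∀ i : Fin p, ∑ j, (W j i) ^ 2 = (Wᵀ * W) i i := by
        intro i; simp [Matrix.mul_apply, Matrix.transpose_apply, sq]
      have h4 : ∑ i ∈ S, ∑ j, (W j i) ^ 2 = ∑ i ∈ S, (1 : ℝ) :=
        Finset.sum_congr rfl fun i _ => by rw [h3, hWW]; simp [Matrix.one_apply]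
      rw [h4, Finset.sum_const, nsmul_eq_mul, mul_one, hSdef, aux_card_filter_lt hm.le]
    have hsum2 : ∑ i ∈ S, μ₂ i = (∑ j, μ₁ j * c j) - t * ∑ i ∈ S, b i := by
      calc ∑ i ∈ S, μ₂ i
          = ∑ i ∈ S, ((∑ j, μ₁ j * (W j i) ^ 2) - t * b i) :=
            Finset.sum_congr rfl fun i _ => by rw [key i, diagW i]
        _ = (∑ i ∈ S, ∑ j, μ₁ j * (W j i) ^ 2) - ∑ i ∈ S, t * b i := Finset.sum_sub_distrib _ _
        _ = (∑ j, μ₁ j * c j) - t * ∑ i ∈ S, b i := by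
            rw [Finset.sum_comm, ← Finset.mul_sum]
            congr 1
            exact Finset.sum_congr rfl fun j _ => by rw [hc, Finset.mul_sum]
    have hre := aux_rearrange hm μ₁ c hs₁ hc0 hc1 hcsum
    rw [hSdef] at hsum2
    linarith
  -- monotonicity of q on [1, d]
  have hmono' : ∀ k, 1 ≤ k → k ≤ d → q k ≤ q d := by
    intro k hk1 hkd
    have : ∀ n, k ≤ n → n ≤ d → q k ≤ q n := by
      intro n
      induction n with
      | zero => intro h1 h2; omega
      | succ n ih =>
        intro h1 h2
        rcases Nat.lt_or_ge k (n + 1) with h | h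
        · have hqn : q k ≤ q n := ih (by omega) (by omega)
          have : q n < q (n + 1) := hmono n (by omega) (by omega)
          omega
        · have : k = n + 1 := by omega
          rw [this]
    exact this d hkd le_rfl
  -- strict positivity of the q d term of b
  have hbd : 0 < ∑ i ∈ Finset.univ.filter (fun j : Fin p => (j : ℕ) < q d), b i := by
    rcases lt_or_eq_of_le (Finset.sum_nonneg fun i _ => hb0 i) with h | h
    · exact h
    exfalso
    have hzero : ∀ i ∈ Finset.univ.filter (fun j : Fin p => (j : ℕ) < q d), b i = 0 :=
      (Finset.sum_eq_zero_iff_of_nonneg fun i _ => hb0 i).mp h.symm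
    -- each corresponding column of V₂ is in the kernel of B
    have hkerv : ∀ i : Fin p, (i : ℕ) < q d → B *ᵥ (fun r => V₂ r i) = 0 := by
      intro i hi
      have hbi : b i = 0 := hzero i (by simp [hi])
      have hdot : star (fun r => V₂ r i) ⬝ᵥ B *ᵥ (fun r => V₂ r i) = 0 := by
        have : (fun r => V₂ r i) ⬝ᵥ B *ᵥ (fun r => V₂ r i) = 0 := by
          rw [← aux_conj_diag]; exact hbi
        simpa using this
      exact (hB.dotProduct_mulVec_zero_iff _).mp hdot
    set w : Fin (q d) → (Fin p → ℝ) :=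
      fun i r => V₂ r (Fin.castLE hqd.le i) with hwdef
    have hunit : IsUnit V₂ := ⟨⟨V₂, V₂ᵀ, hV₂', hV₂⟩, rfl⟩
    have hcols : LinearIndependent ℝ (fun j => V₂ᵀ j) :=
      Matrix.linearIndependent_cols_iff_isUnit.mpr hunit
    have hw : LinearIndependent ℝ w := by
      have := hcols.comp (Fin.castLE hqd.le) (Fin.castLE_injective hqd.le)
      convert this using 1
      rfl
    have hwker : ∀ i, w i ∈ LinearMap.ker B.mulVecLin := by
      intro i
      rw [LinearMap.mem_ker, Matrix.mulVecLin_apply]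
      exact hkerv (Fin.castLE hqd.le i) (by simpa using i.2)
    have hspan : Submodule.span ℝ (Set.range w) ≤ LinearMap.ker B.mulVecLin :=
      Submodule.span_le.mpr (Set.range_subset_iff.mpr hwker)
    have hfr1 : Module.finrank ℝ (Submodule.span ℝ (Set.range w)) = q d := by
      rw [finrank_span_eq_card hw, Fintype.card_fin]
    have hfr2 : Module.finrank ℝ (Submodule.span ℝ (Set.range w))
        ≤ Module.finrank ℝ (LinearMap.ker B.mulVecLin) :=
      Submodule.finrank_mono hspan
    have hrn : B.rank + Module.finrank ℝ (LinearMap.ker B.mulVecLin) = p := by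
      have := LinearMap.finrank_range_add_finrank_ker B.mulVecLin
      rw [Matrix.rank]
      simpa [Module.finrank_fintype_fun_eq_card] using this
    omega
  -- combine
  have hb_nonneg : ∀ k ∈ Finset.Icc 1 d,
      0 ≤ ∑ i ∈ Finset.univ.filter (fun j : Fin p => (j : ℕ) < q k), b i :=
    fun k _ => Finset.sum_nonneg fun i _ => hb0 i
  have hβ : (∑ i ∈ Finset.univ.filter (fun j : Fin p => (j : ℕ) < q d), b i)
      ≤ ∑ k ∈ Finset.Icc 1 d,
          ∑ i ∈ Finset.univ.filter (fun j : Fin p => (j : ℕ) < q k), b i :=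
    Finset.single_le_sum hb_nonneg (by simp [hd])
  have hbound : ∑ k ∈ Finset.Icc 1 d,
        ∑ j ∈ Finset.univ.filter (fun j : Fin p => (j : ℕ) < q k), μ₂ j
      ≤ ∑ k ∈ Finset.Icc 1 d,
          (∑ j ∈ Finset.univ.filter (fun j : Fin p => (j : ℕ) < q k), μ₁ j
            - t * ∑ i ∈ Finset.univ.filter (fun j : Fin p => (j : ℕ) < q k), b i) := by
    refine Finset.sum_le_sum fun k hk => ?_
    have hk' : q k < p :=
      lt_of_le_of_lt (hmono' k (Finset.mem_Icc.mp hk).1 (Finset.mem_Icc.mp hk).2) hqd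
    exact perm (q k) hk'
  rw [Finset.sum_sub_distrib] at hbound
  have hpos : 0 < t * ∑ k ∈ Finset.Icc 1 d,
      ∑ i ∈ Finset.univ.filter (fun j : Fin p => (j : ℕ) < q k), b i := by
    have : 0 < ∑ k ∈ Finset.Icc 1 d,
        ∑ i ∈ Finset.univ.filter (fun j : Fin p => (j : ℕ) < q k), b i :=
      lt_of_lt_of_le hbd hβ
    positivity
  have hmul : ∑ k ∈ Finset.Icc 1 d,
      t * ∑ i ∈ Finset.univ.filter (fun j : Fin p => (j : ℕ) < q k), b i
      = t * ∑ k ∈ Finset.Icc 1 d,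
          ∑ i ∈ Finset.univ.filter (fun j : Fin p => (j : ℕ) < q k), b i :=
    (Finset.mul_sum _ _ _).symm
  rw [hmul] at hbound
  linarith
end

section
/- Let A, B ∈ ℝ^{p×p} be symmetric positive semidefinite with B positive definite, let 0 < q_1 < ... < q_d < p be a signature, and define f(ρ) = Σ_{k=1}^d Σ_{j=1}^{q_k} λ_j(A − ρB), where λ_1(M) ≥ ... ≥ λ_p(M) are the decreasingly sorted eigenvalues of a symmetric matrix M. Let ℓ_1(A,B) ≥ ... ≥ ℓ_p(A,B) denote the eigenvalues of B^{−1/2} A B^{−1/2} in decreasing order (the generalized eigenvalues of the pencil (A, B)). If ρ* is a root of f, then ℓ_{q_d}(A,B) ≤ ρ* ≤ ℓ_1(A,B). -/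
open Matrix Finset

/-- The square root of a positive semidefinite matrix, as `Matrix.PosSemidef.sqrt` was defined
in the older Mathlib (removed since). -/
noncomputable def Matrix.PosSemidef.sqrt {n : Type*} [Fintype n] [DecidableEq n]
    {A : Matrix n n ℝ} (hA : A.PosSemidef) : Matrix n n ℝ :=
  hA.1.eigenvectorUnitary * diagonal ((√·) ∘ hA.1.eigenvalues) *
    (star hA.1.eigenvectorUnitary : Matrix n n ℝ)

private lemma psd_sqrt_transpose {n : Type*} [Fintype n] [DecidableEq n]
    {A : Matrix n n ℝ} (hA : A.PosSemidef) : (hA.sqrt)ᵀ = hA.sqrt := by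
  unfold Matrix.PosSemidef.sqrt
  rw [Matrix.transpose_mul, Matrix.transpose_mul, Matrix.diagonal_transpose, Matrix.mul_assoc]
  simp [Matrix.star_eq_conjTranspose, Matrix.conjTranspose_eq_transpose_of_trivial]

private lemma psd_sqrt_mul_self {n : Type*} [Fintype n] [DecidableEq n]
    {A : Matrix n n ℝ} (hA : A.PosSemidef) : hA.sqrt * hA.sqrt = A := by
  unfold Matrix.PosSemidef.sqrt
  conv_rhs => rw [hA.1.spectral_theorem, Unitary.conjStarAlgAut_apply]
  have hU : (star hA.1.eigenvectorUnitary : Matrix n n ℝ) * hA.1.eigenvectorUnitary = 1 :=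
    Matrix.UnitaryGroup.star_mul_self _
  simp only [Matrix.mul_assoc]
  rw [← Matrix.mul_assoc (star _ : Matrix n n ℝ), hU, Matrix.one_mul, ← Matrix.mul_assoc (diagonal _),
    diagonal_mul_diagonal]
  congr 3
  funext i
  simp [Real.mul_self_sqrt (hA.eigenvalues_nonneg i)]

private lemma quadForm_spec {p : ℕ} {M W : Matrix (Fin p) (Fin p) ℝ} {w : Fin p → ℝ}
    (hM : M = W * Matrix.diagonal w * Wᵀ) (x : Fin p → ℝ) :
    x ⬝ᵥ M *ᵥ x = ∑ i, w i * ((Wᵀ *ᵥ x) i)^2 := by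
  subst hM
  rw [show (W * Matrix.diagonal w * Wᵀ) *ᵥ x = W *ᵥ (Matrix.diagonal w *ᵥ (Wᵀ *ᵥ x)) by
    rw [Matrix.mulVec_mulVec, Matrix.mulVec_mulVec]]
  rw [Matrix.dotProduct_mulVec, ← Matrix.mulVec_transpose]
  simp only [dotProduct, Matrix.mulVec_diagonal]
  exact Finset.sum_congr rfl fun i _ => by ring

private lemma dot_sandwich {p : ℕ} (S N : Matrix (Fin p) (Fin p) ℝ) (hS : Sᵀ = S)
    (x : Fin p → ℝ) :
    x ⬝ᵥ (S * N * S) *ᵥ x = (S *ᵥ x) ⬝ᵥ N *ᵥ (S *ᵥ x) := by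
  rw [show (S * N * S) *ᵥ x = S *ᵥ (N *ᵥ (S *ᵥ x)) by rw [Matrix.mulVec_mulVec, Matrix.mulVec_mulVec]]
  rw [Matrix.dotProduct_mulVec, ← Matrix.mulVec_transpose, hS]

/-- Bounds on Newton's root: if `ρ*` is a root of
`f(ρ) = ∑_{k=1}^d ∑_{j=1}^{q_k} λ_j(A − ρB)`, then `ℓ_{q_d}(A,B) ≤ ρ* ≤ ℓ_1(A,B)`,
where `ℓ_j(A,B)` are the decreasingly sorted eigenvalues of `B^{-1/2} A B^{-1/2}`. -/
theorem trace_ratio_newton_root_bounds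
    {p d : ℕ} (hd : 1 ≤ d)
    (q : ℕ → ℕ) (hq1 : 0 < q 1)
    (hmono : ∀ k, 1 ≤ k → k < d → q k < q (k + 1)) (hqd : q d < p)
    (A B : Matrix (Fin p) (Fin p) ℝ)
    (hA : A.PosSemidef) (hB : B.PosDef)
    (ℓ : Fin p → ℝ)
    (hℓ : IsSortedSpectrum
      ((hB.posSemidef.sqrt)⁻¹ * A * (hB.posSemidef.sqrt)⁻¹) ℓ)
    (ρ : ℝ) (μ : Fin p → ℝ)
    (hμ : IsSortedSpectrum (A - ρ • B) μ)
    (hroot : ∑ k ∈ Finset.Icc 1 d,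
        ∑ j ∈ Finset.univ.filter (fun j : Fin p => (j : ℕ) < q k), μ j = 0) :
    ℓ ⟨q d - 1, by omega⟩ ≤ ρ ∧ ρ ≤ ℓ ⟨0, by omega⟩ := by
  classical
  obtain ⟨hℓmono, V, hV, hC⟩ := hℓ
  obtain ⟨hμmono, U, hU, hM⟩ := hμ
  set S : Matrix (Fin p) (Fin p) ℝ := hB.posSemidef.sqrt with hSdef
  -- basic facts about S
  have hSsymm : Sᵀ = S := by
    exact psd_sqrt_transpose hB.posSemidef
  have hSS : S * S = B := psd_sqrt_mul_self hB.posSemidef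
  have hdetS : IsUnit S.det := by
    have hBdet : (0:ℝ) < B.det := hB.det_pos
    have : S.det * S.det = B.det := by rw [← Matrix.det_mul, hSS]
    refine isUnit_iff_ne_zero.2 fun h => ?_
    rw [h, mul_zero] at this
    linarith
  have hSinv : S * S⁻¹ = 1 := Matrix.mul_nonsing_inv _ hdetS
  have hSinv' : S⁻¹ * S = 1 := Matrix.nonsing_inv_mul _ hdetS
  -- the congruence identity A - ρB = S (C - ρ·1) S
  set C : Matrix (Fin p) (Fin p) ℝ := S⁻¹ * A * S⁻¹ with hCdef
  have hkey : A - ρ • B = S * (C - ρ • 1) * S := by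
    have h1 : S * C * S = A := by
      calc S * (S⁻¹ * A * S⁻¹) * S = (S * S⁻¹) * A * (S⁻¹ * S) := by
            simp only [Matrix.mul_assoc]
        _ = A := by rw [hSinv, hSinv', Matrix.one_mul, Matrix.mul_one]
    calc A - ρ • B = S * C * S - ρ • (S * 1 * S) := by rw [h1, Matrix.mul_one, hSS]
      _ = S * (C - ρ • 1) * S := by
          rw [Matrix.mul_sub, Matrix.sub_mul, mul_smul_comm, smul_mul_assoc]
  -- the spectral decomposition of C - ρ·1
  have hVVt : V * Vᵀ = 1 := mul_eq_one_comm.mp hV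
  have hCρ : C - ρ • 1 = V * Matrix.diagonal (fun i => ℓ i - ρ) * Vᵀ := by
    have hdg : Matrix.diagonal (fun i : Fin p => ℓ i - ρ) = Matrix.diagonal ℓ - ρ • 1 := by
      ext i j
      by_cases h : i = j <;>
        simp [Matrix.diagonal_apply, h, Matrix.one_apply, Matrix.sub_apply]
    rw [hdg, Matrix.mul_sub, Matrix.sub_mul, hC]
    congr 1
    rw [mul_smul_comm, smul_mul_assoc, Matrix.mul_one, hVVt]
  -- two expressions for the quadratic form of M := A - ρB
  have qf1 : ∀ x : Fin p → ℝ, x ⬝ᵥ (A - ρ • B) *ᵥ x = ∑ j, μ j * ((Uᵀ *ᵥ x) j)^2 :=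
    fun x => quadForm_spec hM x
  have qf2 : ∀ x : Fin p → ℝ,
      x ⬝ᵥ (A - ρ • B) *ᵥ x = ∑ i, (ℓ i - ρ) * ((Vᵀ *ᵥ (S *ᵥ x)) i)^2 := by
    intro x
    rw [hkey, dot_sandwich S _ hSsymm, quadForm_spec hCρ]
  -- monotone chain for q
  have hchain : ∀ m, m ≤ d → ∀ k, 1 ≤ k → k ≤ m → q k ≤ q m := by
    intro m
    induction m with
    | zero => intro _ k hk hkm; omega
    | succ n ih =>
      intro hnd k hk hkm
      rcases Nat.lt_or_ge k (n+1) with h | h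
      · have hkn : k ≤ n := by omega
        have h1n : 1 ≤ n := le_trans hk hkn
        have := ih (by omega) k hk hkn
        have := hmono n h1n (by omega)
        omega
      · have hk1 : k = n + 1 := by omega
        rw [hk1]
  have hqk_pos : ∀ k ∈ Finset.Icc 1 d, 0 < q k := by
    intro k hk
    simp only [Finset.mem_Icc] at hk
    have := hchain k hk.2 1 le_rfl hk.1
    omega
  have hqk_le : ∀ k ∈ Finset.Icc 1 d, q k ≤ q d := by
    intro k hk
    simp only [Finset.mem_Icc] at hk
    exact hchain d le_rfl k hk.1 hk.2
  have hqd_pos : 0 < q d := hqk_pos d (Finset.mem_Icc.mpr ⟨hd, le_rfl⟩)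
  have hp_pos : 0 < p := by omega
  constructor
  · -- lower bound: ℓ (q d - 1) ≤ ρ
    by_contra hcon
    push_neg at hcon
    set t : ℕ := q d with htdef
    have ht1 : 1 ≤ t := hqd_pos
    have htp : t ≤ p := le_of_lt hqd
    -- Step A : 0 < μ ⟨t-1⟩
    have hμt : 0 < μ ⟨t - 1, by omega⟩ := by
      by_contra hμt
      push_neg at hμt
      set T : Matrix (Fin p) (Fin p) ℝ := Uᵀ * S⁻¹ * V with hTdef
      set N : Matrix (Fin t) (Fin t) ℝ :=
        fun j i => if hj : (j : ℕ) + 1 < t then T ⟨j, by omega⟩ ⟨i, by omega⟩ else 0 with hNdef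
      have hdetN : N.det = 0 := by
        apply Matrix.det_eq_zero_of_row_eq_zero ⟨t - 1, by omega⟩
        intro i
        simp only [hNdef]
        rw [dif_neg (by omega)]
      obtain ⟨c, hc0, hNc⟩ := (Matrix.exists_mulVec_eq_zero_iff).2 hdetN
      set ch : Fin p → ℝ := fun i => if h : (i : ℕ) < t then c ⟨i, h⟩ else 0 with hchdef
      set x : Fin p → ℝ := S⁻¹ *ᵥ (V *ᵥ ch) with hxdef
      have hSx : S *ᵥ x = V *ᵥ ch := by
        rw [hxdef, Matrix.mulVec_mulVec, hSinv, Matrix.one_mulVec]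
      have hz : Vᵀ *ᵥ (S *ᵥ x) = ch := by
        rw [hSx, Matrix.mulVec_mulVec, hV, Matrix.one_mulVec]
      -- positivity of the quadratic form
      have hpos : 0 < x ⬝ᵥ (A - ρ • B) *ᵥ x := by
        rw [qf2 x, hz]
        apply Finset.sum_pos'
        · intro i _
          by_cases h : (i : ℕ) < t
          · apply mul_nonneg _ (sq_nonneg _)
            have hle : (⟨t - 1, by omega⟩ : Fin p) ≤ i → ℓ i ≤ ℓ ⟨t-1, by omega⟩ :=
              fun h' => hℓmono _ i h'
            have : ℓ ⟨t - 1, by omega⟩ ≤ ℓ i := hℓmono i ⟨t - 1, by omega⟩ (by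
              simp [Fin.le_def]; omega)
            linarith
          · simp [hchdef, h]
        · obtain ⟨i', hi'⟩ := Function.ne_iff.mp hc0
          refine ⟨⟨(i' : ℕ), by omega⟩, Finset.mem_univ _, ?_⟩
          have hch : ch ⟨(i' : ℕ), by omega⟩ = c i' := by
            simp only [hchdef]
            rw [dif_pos i'.2]
          rw [hch]
          apply mul_pos
          · have : ℓ ⟨t - 1, by omega⟩ ≤ ℓ ⟨(i' : ℕ), by omega⟩ :=
              hℓmono _ _ (by simp [Fin.le_def]; omega)
            linarith
          · have hi'' : c i' ≠ 0 := by simpa using hi'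
            exact lt_of_le_of_ne (sq_nonneg _) (Ne.symm (pow_ne_zero 2 hi''))
      -- nonpositivity of the quadratic form
      have hy : Uᵀ *ᵥ x = T *ᵥ ch := by
        rw [hxdef, hTdef, Matrix.mulVec_mulVec, Matrix.mulVec_mulVec]
      have hyzero : ∀ j : Fin p, (j : ℕ) + 1 < t → (Uᵀ *ᵥ x) j = 0 := by
        intro j hj
        rw [hy]
        have hjt : (j : ℕ) < t := by omega
        have : (T *ᵥ ch) j = (N *ᵥ c) ⟨(j : ℕ), hjt⟩ := by
          show ∑ i, T j i * ch i = ∑ i' : Fin t, N ⟨(j:ℕ), hjt⟩ i' * c i'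
          rw [← Finset.sum_filter_of_ne (p := fun i : Fin p => (i : ℕ) < t)
            (by intro i _ hne; by_contra hlt; apply hne; simp [hchdef, hlt])]
          rw [show Finset.univ.filter (fun i : Fin p => (i : ℕ) < t)
              = Finset.univ.image (Fin.castLE htp) by
            ext i
            simp only [Finset.mem_filter, Finset.mem_univ, true_and, Finset.mem_image]
            constructor
            · intro h; exact ⟨⟨(i : ℕ), h⟩, Fin.ext rfl⟩
            · rintro ⟨i', rfl⟩; exact i'.2]
          rw [Finset.sum_image (fun a _ b _ h => Fin.castLE_injective htp h)]
          refine Finset.sum_congr rfl fun i' _ => ?_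
          have h1 : ch (Fin.castLE htp i') = c i' := by
            simp only [hchdef]
            rw [dif_pos (show ((Fin.castLE htp i' : Fin p) : ℕ) < t from i'.2)]
            rfl
          have h2 : N ⟨(j:ℕ), hjt⟩ i' = T j (Fin.castLE htp i') := by
            simp only [hNdef]
            rw [dif_pos hj]
            rfl
          rw [h1, h2]
        rw [this, hNc]
        rfl
      have hnonpos : x ⬝ᵥ (A - ρ • B) *ᵥ x ≤ 0 := by
        rw [qf1 x]
        apply Finset.sum_nonpos
        intro j _
        by_cases hj : (j : ℕ) + 1 < t
        · rw [hyzero j hj]; simp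
        · apply mul_nonpos_of_nonpos_of_nonneg _ (sq_nonneg _)
          have : μ j ≤ μ ⟨t - 1, by omega⟩ :=
            hμmono ⟨t - 1, by omega⟩ j (by simp [Fin.le_def]; omega)
          linarith
      linarith
    -- Step B/C : contradiction with hroot
    have hμpos : ∀ j : Fin p, (j : ℕ) < q d → 0 < μ j := by
      intro j hj
      have : μ ⟨t - 1, by omega⟩ ≤ μ j := hμmono j ⟨t - 1, by omega⟩ (by simp [Fin.le_def]; omega)
      linarith
    have : (0:ℝ) < ∑ k ∈ Finset.Icc 1 d,
        ∑ j ∈ Finset.univ.filter (fun j : Fin p => (j : ℕ) < q k), μ j := by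
      apply Finset.sum_pos
      · intro k hk
        apply Finset.sum_pos
        · intro j hj
          simp only [Finset.mem_filter] at hj
          exact hμpos j (lt_of_lt_of_le hj.2 (hqk_le k hk))
        · exact ⟨⟨0, hp_pos⟩, by simp [Finset.mem_filter]; exact hqk_pos k hk⟩
      · exact ⟨1, by simp [Finset.mem_Icc]; omega⟩
    linarith [hroot]
  · -- upper bound: ρ ≤ ℓ 0
    by_contra hcon
    push_neg at hcon
    have hμneg : ∀ j : Fin p, μ j < 0 := by
      intro j
      set x : Fin p → ℝ := U *ᵥ Pi.single j 1 with hxdef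
      have hUx : Uᵀ *ᵥ x = Pi.single j 1 := by
        rw [hxdef, Matrix.mulVec_mulVec, hU, Matrix.one_mulVec]
      have hx0 : x ≠ 0 := by
        intro h
        have : (Uᵀ *ᵥ x) j = 0 := by rw [h]; simp
        rw [hUx] at this
        simp at this
      have hq1x : x ⬝ᵥ (A - ρ • B) *ᵥ x = μ j := by
        rw [qf1 x, hUx]
        rw [Finset.sum_eq_single j]
        · simp
        · intro i _ hne
          simp [Pi.single_apply, hne]
        · simp
      -- sum of squares of z equals x ⬝ B x
      set z : Fin p → ℝ := Vᵀ *ᵥ (S *ᵥ x) with hzdef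
      have hone : (1 : Matrix (Fin p) (Fin p) ℝ) = V * Matrix.diagonal (fun _ => (1:ℝ)) * Vᵀ := by
        rw [Matrix.diagonal_one, Matrix.mul_one, hVVt]
      have hzz : ∑ i, (z i)^2 = x ⬝ᵥ B *ᵥ x := by
        have h2 := quadForm_spec hone (S *ᵥ x)
        have h3 := dot_sandwich S 1 hSsymm x
        rw [Matrix.mul_one, hSS] at h3
        calc ∑ i, (z i)^2 = ∑ i, 1 * ((Vᵀ *ᵥ (S *ᵥ x)) i)^2 := by simp [hzdef]
          _ = (S *ᵥ x) ⬝ᵥ (1 : Matrix (Fin p) (Fin p) ℝ) *ᵥ (S *ᵥ x) := h2.symm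
          _ = x ⬝ᵥ B *ᵥ x := h3.symm
      have hxBx : 0 < x ⬝ᵥ B *ᵥ x := by
        have := hB.dotProduct_mulVec_pos hx0
        simpa using this
      have : μ j < 0 := by
        rw [← hq1x, qf2 x, ← hzdef]
        have hle : ∀ i : Fin p, (ℓ i - ρ) * (z i)^2 ≤ (ℓ ⟨0, hp_pos⟩ - ρ) * (z i)^2 := by
          intro i
          apply mul_le_mul_of_nonneg_right _ (sq_nonneg _)
          have : ℓ i ≤ ℓ ⟨0, hp_pos⟩ := hℓmono ⟨0, hp_pos⟩ i (by simp [Fin.le_def])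
          linarith
        calc ∑ i, (ℓ i - ρ) * (z i)^2 ≤ ∑ i, (ℓ ⟨0, hp_pos⟩ - ρ) * (z i)^2 :=
              Finset.sum_le_sum fun i _ => hle i
          _ = (ℓ ⟨0, hp_pos⟩ - ρ) * ∑ i, (z i)^2 := by rw [Finset.mul_sum]
          _ < 0 := by
              rw [hzz]
              apply mul_neg_of_neg_of_pos _ hxBx
              have hcon' : ℓ ⟨0, hp_pos⟩ < ρ := hcon
              linarith
      exact this
    have : ∑ k ∈ Finset.Icc 1 d,
        ∑ j ∈ Finset.univ.filter (fun j : Fin p => (j : ℕ) < q k), μ j < 0 := by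
      apply Finset.sum_neg
      · intro k hk
        apply Finset.sum_neg
        · intro j _; exact hμneg j
        · exact ⟨⟨0, hp_pos⟩, by simp [Finset.mem_filter]; exact hqk_pos k hk⟩
      · exact ⟨1, by simp [Finset.mem_Icc]; omega⟩
    linarith [hroot]
end
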